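/- arXiv:2002.00985 — 5 statements merged into one kernel-verified Lean document; each statement's English description precedes it below -/
import Mathlib

section
/- For every n ≥ 1 and every quasi-Stirling permutation w of size n, the number of descents of w is at most n; that is, des(w) ≤ n for all w ∈ Q̄_n. -/
open Finset
open scoped Classical

/-- Number of descents of a word `w` of length `N` over a linearly ordered
alphabet.  Positions are 0-indexed: a position `i` is a descent if it is the
last position or the letter at `i` is greater than the letter at `i + 1`. -/
noncomputable def desW {α : Type*} [LinearOrder α] {N : ℕ} (w : Fin N → α) : ℕ :=
  (univ.filter fun i : Fin N =>
    (i : ℕ) + 1 = N ∨ ∃ h : (i : ℕ) + 1 < N, w ⟨(i : ℕ) + 1, h⟩ < w i).card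

/-- The set of quasi-Stirling permutations of size `n`, encoded as words
`w : Fin (2 * n) → Fin n` (the letters `1, …, n` are encoded as the elements
of `Fin n`) in which every letter occurs exactly twice and there are no indices
`i < j < l < p` with `w i = w l`, `w j = w p` and `w i ≠ w j`. -/
noncomputable def quasiStirlingSet (n : ℕ) : Finset (Fin (2 * n) → Fin n) :=
  univ.filter fun w =>
    (∀ a : Fin n, (univ.filter fun i => w i = a).card = 2) ∧
    ∀ i j l p : Fin (2 * n), i < j → j < l → l < p →
      w i = w l → w j = w p → w i = w j

/-!
A nonempty quasi-Stirling word contains two adjacent equal letters. Deleting such a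
pair `x x` leaves a quasi-Stirling word and loses at most one descent: the doubled
letter creates no descent of its own, and removing a single letter destroys at most
one. Induction on the length gives `2 * des w ≤ 2 * n`.
-/

namespace List

section Descents

variable {α : Type*} [LinearOrder α]

/-- As in `desW`, the last position of a nonempty word counts as a descent. -/
def des : List α → ℕ
  | [] => 0
  | [_] => 1
  | a :: b :: l => (if b < a then 1 else 0) + des (b :: l)

theorem des_cons_le (a : α) (l : List α) : des (a :: l) ≤ des l + 1 := by
  rcases l with _ | ⟨b, l⟩
  · simp [des]
  · simp only [des]
    split <;> omega

theorem des_cons_add_des (a : α) {l l' : List α} (h : l.head? = l'.head?) :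
    des (a :: l) + des l' = des (a :: l') + des l := by
  rcases l with _ | ⟨b, l⟩ <;> rcases l' with _ | ⟨b', l'⟩ <;> simp only [head?_nil, head?_cons,
    Option.some.injEq, reduceCtorEq] at h
  · rfl
  · subst h
    simp only [des]
    omega

theorem des_append_cons_cons_self (u v : List α) (x : α) :
    des (u ++ x :: x :: v) = des (u ++ x :: v) := by
  induction u with
  | nil => simp [des]
  | cons c u ih =>
    have := des_cons_add_des c (l := u ++ x :: x :: v) (l' := u ++ x :: v) (by cases u <;> rfl)
    simp only [cons_append]
    omega

theorem des_append_cons_le (u v : List α) (x : α) : des (u ++ x :: v) ≤ des (u ++ v) + 1 := by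
  induction u with
  | nil => exact des_cons_le x v
  | cons c u ih =>
    rcases u with _ | ⟨d, u⟩
    · rcases v with _ | ⟨e, v⟩
      · simp only [des, cons_append, nil_append]
        split <;> omega
      · simp only [des, cons_append, nil_append]
        grind
    · have := des_cons_add_des c (l := d :: u ++ x :: v) (l' := d :: u ++ v) rfl
      simp only [cons_append] at *
      omega

end Descents

section QuasiStirling

variable {α : Type*} [DecidableEq α]

def IsQuasiStirling (l : List α) : Prop :=
  (∀ x ∈ l, l.count x = 2) ∧ ∀ a b, [a, b, a, b] <+ l → a = b

theorem IsQuasiStirling.append_of_append_cons_cons {u v : List α} {x : α}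
    (h : IsQuasiStirling (u ++ x :: x :: v)) : IsQuasiStirling (u ++ v) := by
  refine ⟨fun y hy => ?_, fun a b hab => h.2 a b (hab.trans ?_)⟩
  · have hy2 := h.1 y (by simp only [mem_append, mem_cons] at hy ⊢; tauto)
    rcases eq_or_ne y x with rfl | hyx
    · have := count_pos_iff.2 hy
      simp only [count_append, count_cons_self] at hy2 this
      omega
    · simpa [count_append, count_cons, hyx.symm] using hy2
  · exact ((sublist_cons_self x v).trans (sublist_cons_self x _)).append_left u

/-- The letters strictly between the two occurrences of the first letter form a
quasi-Stirling word, since a letter with one occurrence inside and one outside would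
cross the first letter; recurse into it. -/
theorem IsQuasiStirling.exists_eq_append_cons_cons {l : List α} (h : IsQuasiStirling l)
    (hne : l ≠ []) : ∃ u x v, l = u ++ x :: x :: v := by
  obtain ⟨a, t, rfl⟩ := exists_cons_of_ne_nil hne
  have hcount := h.1 a mem_cons_self
  obtain ⟨u, v, rfl⟩ := append_of_mem (count_pos_iff.1 (by simp only [count_cons_self] at hcount; omega) : a ∈ t)
  rcases eq_or_ne u [] with rfl | hu
  · exact ⟨[], a, v, rfl⟩
  have hau : a ∉ u := by
    simp only [count_cons_self, count_append] at hcount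
    exact count_eq_zero.1 (by omega)
  have hsub : u <+ a :: (u ++ a :: v) := (sublist_append_left u _).cons a
  have hu' : IsQuasiStirling u := by
    refine ⟨fun y hy => ?_, fun b c hbc => h.2 b c (hbc.trans hsub)⟩
    have hay : a ≠ y := fun hay => hau (hay ▸ hy)
    have hyv : y ∉ v := fun hyv => hay (h.2 a y
      (((singleton_sublist.2 hy).append ((singleton_sublist.2 hyv).cons_cons a)).cons_cons a))
    simpa [count_append, hay, count_eq_zero.2 hyv] using h.1 y (by simp [hy])
  obtain ⟨p, x, q, rfl⟩ := hu'.exists_eq_append_cons_cons hu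
  exact ⟨a :: p, x, q ++ a :: v, by simp⟩
termination_by l.length
decreasing_by subst_vars; simp

end QuasiStirling

theorem IsQuasiStirling.two_mul_des_le_length {α : Type*} [LinearOrder α] {l : List α}
    (h : IsQuasiStirling l) : 2 * des l ≤ l.length := by
  rcases eq_or_ne l [] with rfl | hne
  · simp [des]
  obtain ⟨u, x, v, rfl⟩ := h.exists_eq_append_cons_cons hne
  have ih := h.append_of_append_cons_cons.two_mul_des_le_length
  have hdup := des_append_cons_cons_self u v x
  have hins := des_append_cons_le u v x
  simp only [length_append, length_cons] at *
  omega
termination_by l.length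

end List

section Words

variable {α : Type*} [LinearOrder α]

theorem desW_one (w : Fin 1 → α) : desW w = 1 := by
  rw [desW, filter_true_of_mem fun i _ => Or.inl (by omega)]
  rfl

theorem desW_succ_succ {N : ℕ} (w : Fin (N + 2) → α) :
    desW w = (if w 1 < w 0 then 1 else 0) + desW (Fin.tail w) := by
  rw [desW, desW, card_filter, Fin.sum_univ_succ, card_filter]
  congr 1
  · simp
  · exact sum_congr rfl fun i _ => by simp [Fin.tail, Fin.succ]

theorem desW_eq_des_ofFn : ∀ {N : ℕ} (w : Fin N → α), desW w = (List.ofFn w).des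
  | 0, w => by simp [desW, List.des]
  | 1, w => desW_one w
  | N + 2, w => by
    rw [desW_succ_succ, desW_eq_des_ofFn (Fin.tail w)]
    simp only [List.ofFn_succ]
    rfl

end Words

theorem List.count_ofFn {α : Type*} [DecidableEq α] {N : ℕ} (w : Fin N → α) (a : α) :
    (List.ofFn w).count a = #{i | w i = a} := by
  rw [List.ofFn_eq_map, List.count, List.countP_map, card_def, filter_val,
    ← Multiset.countP_eq_card_filter, Fin.univ_def]
  exact List.countP_congr (by simp)

theorem isQuasiStirling_ofFn {α : Type*} [DecidableEq α] {N : ℕ} {w : Fin N → α}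
    (hcount : ∀ a, #{i | w i = a} = 2)
    (hcross : ∀ i j k l : Fin N, i < j → j < k → k < l → w i = w k → w j = w l → w i = w j) :
    (List.ofFn w).IsQuasiStirling := by
  refine ⟨fun x _ => (List.count_ofFn w x).trans (hcount x), fun a b hab => ?_⟩
  obtain ⟨f, hf⟩ := List.sublist_iff_exists_fin_orderEmbedding_get_eq.1 hab
  let g : Fin 4 ↪o Fin N := f.trans (Fin.castOrderIso List.length_ofFn).toOrderEmbedding
  have hg (k : Fin 4) : w (g k) = [a, b, a, b].get k := by
    rw [hf k, List.get_ofFn]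
    rfl
  have := hcross (g 0) (g 1) (g 2) (g 3) (g.strictMono (by decide)) (g.strictMono (by decide))
    (g.strictMono (by decide)) (by simp [hg]) (by simp [hg])
  simpa [hg] using this

theorem des_le_of_quasiStirling_general (n : ℕ)
    (w : Fin (2 * n) → Fin n) (hw : w ∈ quasiStirlingSet n) :
    desW w ≤ n := by
  obtain ⟨hcount, hcross⟩ := (mem_filter.1 hw).2
  have h := (isQuasiStirling_ofFn hcount hcross).two_mul_des_le_length
  rw [List.length_ofFn, ← desW_eq_des_ofFn] at h
  omega

/-- Every quasi-Stirling permutation of size `n ≥ 1` has at most `n` descents. -/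
theorem des_le_of_quasiStirling (n : ℕ) (hn : 1 ≤ n)
    (w : Fin (2 * n) → Fin n) (hw : w ∈ quasiStirlingSet n) :
    desW w ≤ n :=
  des_le_of_quasiStirling_general n w hw
end

section
/- For every n ≥ 1 and k ≥ 1, the number of k-quasi-Stirling permutations of size n equals (kn)!/((k−1)n+1)!, which equals n! times the k-Catalan number C_{n,k} = (1/((k−1)n+1))·binom(kn, n). -/
open Finset
open scoped Classical

/-- The set of `k`-quasi-Stirling permutations of size `n`, encoded as words
`w : Fin (k * n) → Fin n` (the letters `1, …, n` are encoded as the elements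
of `Fin n`) in which every letter occurs exactly `k` times and there are no
indices `i < j < l < p` with `w i = w l`, `w j = w p` and `w i ≠ w j`. -/
noncomputable def kQuasiStirlingSet (k n : ℕ) : Finset (Fin (k * n) → Fin n) :=
  univ.filter fun w =>
    (∀ a : Fin n, (univ.filter fun i => w i = a).card = k) ∧
    ∀ i j l p : Fin (k * n), i < j → j < l → l < p →
      w i = w l → w j = w p → w i = w j

/-!
Send a quasi-Stirling word to the set `B` of positions where a letter occurs for the first time.
Since each letter occurs `k` times, a prefix of length `t` contains at least `t / k` elements of
`B`: `B` is a ballot set. Since the word is noncrossing, a letter that is not new repeats the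
letter of the last earlier position whose letter still has occurrences to come; so `B` determines
the word up to renaming its letters, and every ballot set of size `n` arises (insert a block of
`k` copies of a fresh letter at the largest element of `B`). Hence the count is `n!` times the
number of ballot sets. By the cycle lemma, exactly one of the `k n + 1` rotations of an `n`-subset
of `ℤ / (k n + 1)` is a ballot set, and ballot sets never contain the last point, so there are
`binom(k n + 1, n) / (k n + 1)` of them.
-/

section CycleLemma

variable {x : ℕ → ℤ} {N : ℕ}

theorem sum_range_add_period (hx : Function.Periodic x N) (t : ℕ) :
    ∑ i ∈ range (t + N), x i = ∑ i ∈ range t, x i + ∑ i ∈ range N, x i := by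
  rw [add_comm t, sum_range_add, add_comm]
  exact congrArg₂ _ (sum_congr rfl fun i _ => by rw [add_comm, hx]) rfl

theorem forall_sum_range_add_nonneg_iff (hx : Function.Periodic x N)
    (hsum : ∑ i ∈ range N, x i = -1) {d : ℕ} (hd : d < N) :
    (∀ t < N, 0 ≤ ∑ i ∈ range t, x (d + i)) ↔
      (∀ j < N, ∑ i ∈ range d, x i ≤ ∑ i ∈ range j, x i) ∧
        ∀ j < d, ∑ i ∈ range d, x i < ∑ i ∈ range j, x i := by
  set P : ℕ → ℤ := fun t => ∑ i ∈ range t, x i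
  have hshift (t : ℕ) : ∑ i ∈ range t, x (d + i) = P (d + t) - P d := by
    simp only [P, sum_range_add]; ring
  have hper (j : ℕ) : P (j + N) = P j - 1 := by
    simp only [P, sum_range_add_period hx, hsum]; ring
  simp only [hshift, sub_nonneg]
  constructor
  · intro h
    have hlow (j) (hj : j < d) : P d < P j := by
      have := h (j + N - d) (by omega)
      rw [show d + (j + N - d) = j + N by omega, hper] at this
      omega
    refine ⟨fun j hj => ?_, hlow⟩
    rcases lt_or_ge j d with hjd | hjd
    · exact (hlow j hjd).le
    · simpa [show d + (j - d) = j by omega] using h (j - d) (by omega)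
  · rintro ⟨hmin, hlow⟩ t ht
    rcases lt_or_ge (d + t) N with h | h
    · exact hmin _ h
    · have := hlow (d + t - N) (by omega)
      rw [show d + t = d + t - N + N by omega, hper]
      simp only [P] at this ⊢
      omega

/-- The cycle lemma of Dvoretzky and Motzkin: the good rotation starts at the first minimum of
the partial sums. -/
theorem existsUnique_forall_sum_range_add_nonneg (hx : Function.Periodic x N)
    (hsum : ∑ i ∈ range N, x i = -1) :
    ∃! d : Fin N, ∀ t < N, 0 ≤ ∑ i ∈ range t, x (d + i) := by
  have hN : 0 < N := Nat.pos_of_ne_zero fun h => by simp [h] at hsum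
  obtain ⟨d, hd, hmin⟩ := (range N).exists_min_image
    (fun j => toLex (∑ i ∈ range j, x i, j)) ⟨0, by simpa⟩
  simp only [mem_range, Prod.Lex.toLex_le_toLex] at hd hmin
  refine ⟨⟨d, hd⟩, (forall_sum_range_add_nonneg_iff hx hsum hd).2 ⟨fun j hj => ?_, fun j hj => ?_⟩,
    fun d' hd' => ?_⟩
  · rcases hmin j hj with h | h
    exacts [h.le, h.1.le]
  · rcases hmin j (hj.trans hd) with h | h
    exacts [h, absurd h.2 (by omega)]
  · obtain ⟨hmin', hlow'⟩ := (forall_sum_range_add_nonneg_iff hx hsum d'.isLt).1 hd'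
    have := hmin' d hd
    have := hmin d' d'.isLt
    refine Fin.ext (show d'.val = d from ?_)
    rcases lt_trichotomy d'.val d with h | h | h
    · omega
    · exact h
    · have := hlow' d h
      omega

end CycleLemma

section Ballot

open Fin.NatCast

variable (k : ℕ) {m : ℕ}

def IsBallot (S : Finset (Fin m)) : Prop := ∀ t < m, t ≤ k * #{i ∈ S | i.val < t}

noncomputable def ballotSets (n m : ℕ) : Finset (Finset (Fin m)) :=
  {S ∈ powersetCard n univ | IsBallot k S}

/-- Steps of the lattice path of `S`, read cyclically: `IsBallot k S` says that its partial sums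
are nonnegative. -/
noncomputable def ballotWeight [NeZero m] (S : Finset (Fin m)) (i : ℕ) : ℤ :=
  if ((i : ℕ) : Fin m) ∈ S then k - 1 else -1

variable {k}

@[simp]
theorem mem_ballotSets {n : ℕ} {S : Finset (Fin m)} :
    S ∈ ballotSets k n m ↔ #S = n ∧ IsBallot k S := by
  simp [ballotSets]

theorem card_filter_val_lt_eq_card_filter_range [NeZero m] (S : Finset (Fin m)) {t : ℕ}
    (ht : t ≤ m) : #{i ∈ S | i.val < t} = #{i ∈ range t | ((i : ℕ) : Fin m) ∈ S} := by
  refine card_nbij' Fin.val (fun i => (i : Fin m)) ?_ ?_ ?_ ?_ <;> intro i hi <;>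
    simp only [coe_filter, Set.mem_ofPred_eq, mem_range] at hi ⊢
  · simpa [hi.2] using hi.1
  · simp [hi, Fin.val_cast_of_lt (hi.1.trans_le ht)]
  · simp
  · simp [Fin.val_cast_of_lt (hi.1.trans_le ht)]

theorem sum_range_ballotWeight [NeZero m] (S : Finset (Fin m)) {t : ℕ} (ht : t ≤ m) :
    ∑ i ∈ range t, ballotWeight k S i = k * #{i ∈ S | i.val < t} - t := by
  have (i : ℕ) : ballotWeight k S i = k * (if ((i : ℕ) : Fin m) ∈ S then 1 else 0) - 1 := by
    unfold ballotWeight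
    split_ifs <;> ring
  rw [card_filter_val_lt_eq_card_filter_range S ht]
  simp only [this, sum_sub_distrib, ← mul_sum, sum_boole, sum_const, card_range]
  simp

theorem isBallot_iff_sum_range_ballotWeight_nonneg [NeZero m] (S : Finset (Fin m)) :
    IsBallot k S ↔ ∀ t < m, 0 ≤ ∑ i ∈ range t, ballotWeight k S i := by
  refine forall₂_congr fun t ht => ?_
  rw [sum_range_ballotWeight S ht.le, sub_nonneg]
  exact_mod_cast Iff.rfl

theorem existsUnique_isBallot_rotate [NeZero m] {S : Finset (Fin m)} (hS : k * #S + 1 = m) :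
    ∃! d : Fin m, IsBallot k ((Equiv.subRight d).finsetCongr S) := by
  have hx : Function.Periodic (ballotWeight k S) m := fun i => by simp [ballotWeight]
  have hsum : ∑ i ∈ range m, ballotWeight k S i = -1 := by
    rw [sum_range_ballotWeight S le_rfl, filter_true_of_mem fun i _ => i.isLt]
    have : ((k * #S + 1 : ℕ) : ℤ) = m := congrArg _ hS
    push_cast at this
    linarith
  refine (existsUnique_congr fun d => ?_).2 (existsUnique_forall_sum_range_add_nonneg hx hsum)
  rw [isBallot_iff_sum_range_ballotWeight_nonneg]
  refine forall₂_congr fun t _ => ?_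
  simp [ballotWeight, mem_map_equiv, add_comm]

theorem card_filter_isBallot_rotate [NeZero m] (n : ℕ) (d : Fin m) :
    #{T ∈ powersetCard n univ | IsBallot k ((Equiv.subRight d).finsetCongr T)} =
      #(ballotSets k n m) :=
  card_equiv (Equiv.subRight d).finsetCongr fun T => by
    simp only [mem_filter, mem_powersetCard_univ, mem_ballotSets]
    simp

theorem card_ballotSets_mul [NeZero m] {n : ℕ} (hm : k * n + 1 = m) :
    #(ballotSets k n m) * m = m.choose n := by
  calc #(ballotSets k n m) * m
      = ∑ d : Fin m,
          #{T ∈ powersetCard n univ | IsBallot k ((Equiv.subRight d).finsetCongr T)} := by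
        rw [sum_congr rfl fun d _ => card_filter_isBallot_rotate n d]
        simp [mul_comm]
    _ = ∑ T ∈ powersetCard n univ, #{d | IsBallot k ((Equiv.subRight d).finsetCongr T)} := by
        simp only [card_filter]; exact sum_comm
    _ = ∑ T ∈ powersetCard n (univ : Finset (Fin m)), 1 := sum_congr rfl fun T hT => by
        have := existsUnique_isBallot_rotate (k := k) (S := T)
          (by rw [mem_powersetCard_univ.1 hT, hm])
        exact card_eq_one_iff_existsUnique.2 (by simp only [mem_filter]; simpa using this)
    _ = m.choose n := by simp

theorem card_filter_val_lt_map_castSucc {K : ℕ} (B : Finset (Fin K)) (t : ℕ) :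
    #{i ∈ B.map Fin.castSuccEmb | i.val < t} = #{i ∈ B | i.val < t} := by
  rw [filter_map, card_map]
  rfl

theorem last_notMem_of_isBallot {K : ℕ} (hk : 0 < k) {S : Finset (Fin (K + 1))}
    (hS : IsBallot k S) (hcard : k * #S = K) : Fin.last K ∉ S := by
  intro hlast
  have hsub : {i ∈ S | i.val < K} ⊆ S.erase (Fin.last K) :=
    fun i hi => by simp only [mem_filter] at hi; simp [hi.1, Fin.ext_iff, hi.2.ne]
  have h := (hS K K.lt_succ_self).trans (Nat.mul_le_mul_left k (card_le_card hsub))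
  rw [card_erase_of_mem hlast, Nat.mul_sub_one] at h
  have : k ≤ k * #S := Nat.le_mul_of_pos_right k (card_pos.2 ⟨_, hlast⟩)
  omega

theorem card_ballotSets_castSucc (hk : 0 < k) {n K : ℕ} (hK : k * n = K) :
    #(ballotSets k n K) = #(ballotSets k n (K + 1)) := by
  refine card_bij (fun B _ => B.map Fin.castSuccEmb) ?_ (fun _ _ _ _ => map_inj.1) ?_
  · intro B hB
    rw [mem_ballotSets] at hB ⊢
    refine ⟨by simpa using hB.1, fun t ht => ?_⟩
    rw [card_filter_val_lt_map_castSucc]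
    rcases (Nat.lt_succ_iff.1 ht).lt_or_eq with ht | rfl
    · exact hB.2 t ht
    · rw [filter_true_of_mem fun i _ => i.isLt, hB.1, hK]
  · intro S hS
    rw [mem_ballotSets] at hS
    have hlast := last_notMem_of_isBallot hk hS.2 (by rw [hS.1, hK])
    have hS' : (univ.filter fun i => Fin.castSucc i ∈ S).map Fin.castSuccEmb = S := by
      ext x
      cases x using Fin.lastCases <;> simp [hlast]
    refine ⟨_, mem_ballotSets.2 ⟨?_, fun t ht => ?_⟩, hS'⟩
    · rw [← hS.1, ← card_map Fin.castSuccEmb, hS']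
    · have := hS.2 t (ht.trans K.lt_succ_self)
      rwa [← hS', card_filter_val_lt_map_castSucc] at this

end Ballot

section Words

variable {ι α : Type*} [LinearOrder ι] [Fintype ι]

noncomputable def firstOcc (w : ι → α) : Finset ι := {i | ∀ j < i, w j ≠ w i}

def IsNoncrossing (w : ι → α) : Prop :=
  ∀ i j l p, i < j → j < l → l < p → w i = w l → w j = w p → w i = w j

theorem firstOcc_comp {β : Type*} {g : α → β} (hg : Function.Injective g) (w : ι → α) :
    firstOcc (g ∘ w) = firstOcc w := by
  simp [firstOcc, hg.eq_iff]

theorem card_filter_firstOcc_eq_card_image [DecidableEq α] (w : ι → α) {P : ι → Prop}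
    [DecidablePred P] (hP : ∀ i j, j ≤ i → P i → P j) :
    #{i ∈ firstOcc w | P i} = #(({i | P i} : Finset ι).image w) := by
  refine card_bij (fun i _ => w i) (fun i hi => ?_) ?_ ?_
  · simp only [firstOcc, mem_filter, mem_univ, true_and] at hi
    exact mem_image_of_mem w (by simpa using hi.2)
  · intro i hi j hj hij
    simp only [firstOcc, mem_filter, mem_univ, true_and] at hi hj
    rcases lt_trichotomy i j with h | h | h
    exacts [absurd hij (hj.1 i h), h, absurd hij.symm (hi.1 j h)]
  · simp only [mem_image, mem_filter, mem_univ, true_and]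
    rintro _ ⟨t, ht, rfl⟩
    have hne : ({j | w j = w t} : Finset ι).Nonempty := ⟨t, by simp⟩
    obtain ⟨hmem, hmin⟩ := isLeast_min' _ hne
    set j := ({j | w j = w t} : Finset ι).min' hne
    simp only [coe_filter, mem_univ, true_and, Set.mem_ofPred_eq] at hmem
    refine ⟨j, ⟨?_, hP t j (hmin (by simp)) ht⟩, hmem⟩
    simp only [firstOcc, mem_filter, mem_univ, true_and]
    exact fun i hi hij => absurd (hmin (by simpa [hmem] using hij)) (not_le.2 hi)

theorem card_firstOcc [DecidableEq α] (w : ι → α) : #(firstOcc w) = #(univ.image w) := by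
  simpa using card_filter_firstOcc_eq_card_image w (P := fun _ => True) (by simp)

theorem isBallot_firstOcc [DecidableEq α] {k K : ℕ} {w : Fin K → α}
    (hw : ∀ a, #{i | w i = a} ≤ k) : IsBallot k (firstOcc w) := by
  intro t ht
  rw [card_filter_firstOcc_eq_card_image w (P := fun i => i.val < t)
    fun i j hji hi => lt_of_le_of_lt hji hi]
  calc t = #{i : Fin K | i.val < t} := by rw [Fin.card_filter_val_lt]; omega
    _ ≤ k * _ := card_le_mul_card_image _ k fun a _ =>
      (card_le_card fun i => by simp +contextual).trans (hw a)

variable [DecidableEq α] {k : ℕ} {w : ι → α}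

variable (k) in
/-- When every letter occurs `k` times: the positions before `j` whose letter still occurs at or
after `j`. -/
noncomputable def openBefore (w : ι → α) (j : ι) : Finset ι :=
  {t | t < j ∧ #{s | s < j ∧ w s = w t} < k}

theorem lt_of_mem_openBefore {j t : ι} (ht : t ∈ openBefore k w j) : t < j := by
  simp only [openBefore, mem_filter, mem_univ, true_and] at ht
  exact ht.1

theorem mem_openBefore_of_eq {j t : ι} (hc : #{s | w s = w j} = k) (htj : t < j)
    (ht : w t = w j) : t ∈ openBefore k w j := by
  simp only [openBefore, mem_filter, mem_univ, true_and, ht, htj]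
  refine hc ▸ card_lt_card ⟨fun s => by simp +contextual, fun h => ?_⟩
  simpa using h (show j ∈ ({s | w s = w j} : Finset ι) by simp)

theorem eq_of_isGreatest_openBefore (hc : ∀ i, #{s | w s = w i} = k) (hnc : IsNoncrossing w)
    {j t : ι} (hj : j ∉ firstOcc w) (ht : IsGreatest (openBefore k w j : Set ι) t) :
    w j = w t := by
  obtain ⟨t₀, ht₀j, ht₀⟩ : ∃ t₀ < j, w t₀ = w j := by simpa [firstOcc] using hj
  have ht₀t : t₀ ≤ t := ht.2 (mem_openBefore_of_eq (hc j) ht₀j ht₀)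
  have htopen := ht.1
  simp only [openBefore, coe_filter, mem_univ, true_and, Set.mem_ofPred_eq] at htopen
  by_contra hne
  -- the letter of `t` occurs again after `j`, and that occurrence would cross the pair `t₀`, `j`
  obtain ⟨p, hjp, hp⟩ : ∃ p, j < p ∧ w p = w t := by
    by_contra! h
    have hsub : ({s | w s = w t} : Finset ι) ⊆ ({s | s < j ∧ w s = w t} : Finset ι) := fun s => by
      simp only [mem_filter, mem_univ, true_and]
      intro hs
      exact ⟨lt_of_le_of_ne (not_lt.1 fun hjs => h s hjs hs) fun hsj => hne (hsj ▸ hs), hs⟩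
    exact (card_le_card hsub).not_gt (hc t ▸ htopen.2)
  have ht₀t' : t₀ < t := lt_of_le_of_ne ht₀t fun h => hne (h ▸ ht₀.symm)
  exact hne (ht₀ ▸ hnc t₀ t j p ht₀t' htopen.1 hjp ht₀ hp.symm)

theorem eq_iff_eq_of_firstOcc_eq {β : Type*} [DecidableEq β] {w' : ι → β}
    (hc : ∀ i, #{s | w s = w i} = k) (hc' : ∀ i, #{s | w' s = w' i} = k)
    (hnc : IsNoncrossing w) (hnc' : IsNoncrossing w') (hfo : firstOcc w = firstOcc w')
    (i j : ι) : w i = w j ↔ w' i = w' j := by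
  suffices key : ∀ j, ∀ i ≤ j, (w i = w j ↔ w' i = w' j) by
    rcases le_total i j with h | h
    exacts [key j i h, by simpa [eq_comm] using key i j h]
  intro j
  induction j using WellFoundedLT.induction with
  | _ j ih =>
  have hlt : ∀ a < j, ∀ b < j, (w a = w b ↔ w' a = w' b) := fun a ha b hb => by
    rcases le_total a b with h | h
    exacts [ih b hb a h, by simpa [eq_comm] using ih a ha b h]
  intro i hij
  rcases hij.lt_or_eq with hij | rfl
  swap; · simp
  by_cases hj : j ∈ firstOcc w
  · have hj' := hfo ▸ hj
    simp only [firstOcc, mem_filter, mem_univ, true_and] at hj hj'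
    exact iff_of_false (hj i hij) (hj' i hij)
  have hj' := hfo ▸ hj
  have hopen : openBefore k w j = openBefore k w' j := by
    ext t
    simp only [openBefore, mem_filter, mem_univ, true_and]
    refine and_congr_right fun htj => ?_
    rw [filter_congr fun s _ => and_congr_right fun hsj => hlt s hsj t htj]
  obtain ⟨t₀, ht₀j, ht₀⟩ : ∃ t₀ < j, w t₀ = w j := by simpa [firstOcc] using hj
  have hne : (openBefore k w j).Nonempty := ⟨t₀, mem_openBefore_of_eq (hc j) ht₀j ht₀⟩
  obtain ⟨t, ht⟩ : ∃ t, IsGreatest (openBefore k w j : Set ι) t := ⟨_, isGreatest_max' _ hne⟩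
  have htj : t < j := lt_of_mem_openBefore ht.1
  rw [eq_of_isGreatest_openBefore hc hnc hj ht]
  rw [hopen] at ht
  rw [eq_of_isGreatest_openBefore hc' hnc' hj' ht]
  exact hlt i hij t htj

end Words

theorem exists_perm_comp_eq_of_ker_eq {ι β : Type*} {w w' : ι → β}
    (hw : Function.Surjective w) (hw' : Function.Surjective w')
    (h : ∀ i j, w i = w j ↔ w' i = w' j) : ∃ σ : Equiv.Perm β, w' = σ ∘ w := by
  set e := Setoid.quotientKerEquivOfSurjective w hw
  refine ⟨e.symm.trans <| (Quotient.congrRight h).trans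
    (Setoid.quotientKerEquivOfSurjective w' hw'), funext fun i => ?_⟩
  have : e.symm (w i) = ⟦i⟧ := e.symm_apply_eq.2 rfl
  simp only [Function.comp_apply, Equiv.trans_apply, this]
  rfl

section InsertBlock

variable {α : Type*} (f : ℕ → α) (p k : ℕ) (c : α)

def insertBlock : ℕ → α := fun i => if i < p then f i else if i < p + k then c else f (i - k)

variable {f p k c} {N : ℕ}

theorem insertBlock_eq_iff_mem_block (hfc : ∀ i < N, f i ≠ c) (hpN : p ≤ N) {x : ℕ}
    (hx : x < N + k) : insertBlock f p k c x = c ↔ p ≤ x ∧ x < p + k := by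
  unfold insertBlock
  split_ifs with h1 h2
  · exact iff_of_false (hfc x (by omega)) (by omega)
  · exact iff_of_true rfl (by omega)
  · exact iff_of_false (hfc (x - k) (by omega)) (by omega)

theorem insertBlock_of_notMem_block {x : ℕ} (hx : ¬(p ≤ x ∧ x < p + k)) :
    insertBlock f p k c x = f (if x < p then x else x - k) := by
  unfold insertBlock
  split_ifs <;> first | rfl | omega

theorem insertBlock_noncrossing (hfc : ∀ i < N, f i ≠ c) (hpN : p ≤ N)
    (hf : ∀ i j l q, i < j → j < l → l < q → q < N → f i = f l → f j = f q → f i = f j) :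
    ∀ i j l q, i < j → j < l → l < q → q < N + k →
      insertBlock f p k c i = insertBlock f p k c l →
      insertBlock f p k c j = insertBlock f p k c q →
      insertBlock f p k c i = insertBlock f p k c j := by
  set g := insertBlock f p k c
  have hblock (x) (hx : x < N + k) : g x = c ↔ p ≤ x ∧ x < p + k :=
    insertBlock_eq_iff_mem_block hfc hpN hx
  intro i j l q hij hjl hlq hq hil hjq
  by_cases hj : g j = c
  · have := (hblock j (by omega)).1 hj
    have := (hblock q hq).1 (hjq ▸ hj)
    rw [hil, hj, (hblock l (by omega)).2 (by omega)]
  by_cases hi : g i = c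
  · have := (hblock i (by omega)).1 hi
    have := (hblock l (by omega)).1 (hil ▸ hi)
    exact absurd ((hblock j (by omega)).2 (by omega)) hj
  have hi' := mt (hblock i (by omega)).2 hi
  have hj' := mt (hblock j (by omega)).2 hj
  have hl' := mt (hblock l (by omega)).2 (hil ▸ hi)
  have hq' := mt (hblock q hq).2 (hjq ▸ hj)
  simp only [g, insertBlock_of_notMem_block, hi', hj', hl', hq', not_false_eq_true] at hil hjq ⊢
  refine hf _ _ _ _ ?_ ?_ ?_ ?_ hil hjq <;> split_ifs <;> omega

theorem card_filter_insertBlock_of_ne [DecidableEq α] (hpN : p ≤ N) {a : α} (ha : a ≠ c) :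
    #{i ∈ range (N + k) | insertBlock f p k c i = a} = #{i ∈ range N | f i = a} := by
  refine card_nbij' (fun i => if i < p then i else i - k) (fun i => if i < p then i else i + k)
    ?_ ?_ ?_ ?_ <;> intro i hi <;>
    simp only [coe_filter, mem_range, Set.mem_ofPred_eq] at hi ⊢
  · have : ¬(p ≤ i ∧ i < p + k) := fun h => ha (by simp [← hi.2, insertBlock, h.2, not_lt.2 h.1])
    rw [← insertBlock_of_notMem_block (f := f) (c := c) this]
    refine ⟨?_, hi.2⟩
    split_ifs <;> omega
  · refine ⟨by split_ifs <;> omega, ?_⟩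
    rw [← hi.2, insertBlock]
    split_ifs <;> first | rfl | omega | (congr 1; omega)
  · have : ¬(p ≤ i ∧ i < p + k) := fun h => ha (by simp [← hi.2, insertBlock, h.2, not_lt.2 h.1])
    split_ifs <;> omega
  · split_ifs <;> omega

theorem card_filter_insertBlock_self [DecidableEq α] (hfc : ∀ i < N, f i ≠ c) (hpN : p ≤ N) :
    #{i ∈ range (N + k) | insertBlock f p k c i = c} = k := by
  rw [show {i ∈ range (N + k) | insertBlock f p k c i = c} = Ico p (p + k) by
    ext x
    simp only [mem_filter, mem_range, mem_Ico]
    constructor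
    · exact fun h => (insertBlock_eq_iff_mem_block hfc hpN h.1).1 h.2
    · exact fun h => ⟨by omega, (insertBlock_eq_iff_mem_block hfc hpN (by omega)).2 h⟩]
  simp

theorem insertBlock_firstOcc_iff (hk : 0 < k) (hfc : ∀ i < N, f i ≠ c) (hpN : p ≤ N)
    {B : Finset ℕ} (hB : ∀ i < N, (∀ j < i, f j ≠ f i) ↔ i ∈ B) (hBp : ∀ i ∈ B, i < p)
    {i : ℕ} (hi : i < N + k) :
    (∀ j < i, insertBlock f p k c j ≠ insertBlock f p k c i) ↔ i ∈ insert p B := by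
  have hpc : insertBlock f p k c p = c := by simp [insertBlock, hk]
  rcases lt_trichotomy i p with hip | rfl | hpi
  · have hagree (j) (hj : j ≤ i) : insertBlock f p k c j = f j := if_pos (by omega)
    rw [mem_insert, or_iff_right hip.ne, ← hB i (by omega)]
    exact forall₂_congr fun j hj => by rw [hagree j hj.le, hagree i le_rfl]
  · refine iff_of_true (fun j hj => ?_) (mem_insert_self _ _)
    rw [hpc, insertBlock, if_pos hj]
    exact hfc j (by omega)
  · have hiB : i ∉ insert p B := by
      simp only [mem_insert, not_or]
      exact ⟨hpi.ne', fun h => (hBp i h).not_gt hpi⟩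
    refine iff_of_false (fun h => ?_) hiB
    by_cases hblock : i < p + k
    · exact h p hpi (by rw [hpc]; simp [insertBlock, not_lt.2 hpi.le, hblock])
    · have hnot : i - k ∉ B := fun h => (hBp _ h).not_ge (by omega)
      rw [← hB (i - k) (by omega)] at hnot
      push Not at hnot
      obtain ⟨j, hj, hfj⟩ := hnot
      refine h (if j < p then j else j + k) (by split_ifs <;> omega) ?_
      simp only [insertBlock, if_neg (not_lt.2 hpi.le), if_neg hblock]
      split_ifs <;> first | omega | simpa using hfj

end InsertBlock

theorem exists_word_of_ballot {k : ℕ} (hk : 0 < k) (B : Finset ℕ) (n : ℕ)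
    (hBN : ∀ i ∈ B, i < k * n) (hcard : #B = n) (hB : ∀ t < k * n, t ≤ k * #{i ∈ B | i < t}) :
    ∃ f : ℕ → ℕ, (∀ i < k * n, f i < n) ∧ (∀ a < n, #{i ∈ range (k * n) | f i = a} = k) ∧
      (∀ i j l q, i < j → j < l → l < q → q < k * n → f i = f l → f j = f q → f i = f j) ∧
      ∀ i < k * n, ((∀ j < i, f j ≠ f i) ↔ i ∈ B) := by
  induction B using Finset.induction_on_max generalizing n with
  | empty =>
    subst hcard
    exact ⟨fun _ => 0, by simp⟩
  | insert p B hBp ih =>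
  -- realise `B`, then insert a block of `k` copies of the fresh letter `n` at its new maximum `p`
  have hpB : p ∉ B := fun h => (hBp p h).false
  obtain ⟨n, rfl⟩ : ∃ n', n = n' + 1 := ⟨#B, by rw [← hcard, card_insert_of_notMem hpB]⟩
  have hcard' : #B = n := by rw [card_insert_of_notMem hpB] at hcard; omega
  rw [Nat.mul_succ] at hBN hB ⊢
  have hpN : p ≤ k * n := by
    have := hB p (hBN p (mem_insert_self p B))
    rwa [filter_insert, if_neg (lt_irrefl p), filter_true_of_mem hBp, hcard'] at this
  obtain ⟨f, hfn, hfcount, hfnc, hfB⟩ := ih n (fun i hi => (hBp i hi).trans_le hpN) hcard'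
    fun t ht => by
      rcases le_or_gt t p with htp | htp
      · simpa [filter_insert, not_lt.2 htp] using hB t (by omega)
      · rw [filter_true_of_mem fun i hi => (hBp i hi).trans htp, hcard']
        omega
  have hfc : ∀ i < k * n, f i ≠ n := fun i hi => (hfn i hi).ne
  refine ⟨insertBlock f p k n, fun i hi => ?_, fun a ha => ?_,
    insertBlock_noncrossing hfc hpN hfnc, fun i hi => insertBlock_firstOcc_iff hk hfc hpN hfB hBp hi⟩
  · unfold insertBlock
    split_ifs
    exacts [(hfn i (by omega)).trans n.lt_succ_self, n.lt_succ_self,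
      (hfn _ (by omega)).trans n.lt_succ_self]
  · rcases (Nat.lt_succ_iff.1 ha).lt_or_eq with ha | rfl
    · rw [card_filter_insertBlock_of_ne hpN ha.ne, hfcount a ha]
    · exact card_filter_insertBlock_self hfc hpN

theorem card_filter_fin_val_eq_card_filter_range {N : ℕ} (P : ℕ → Prop) [DecidablePred P] :
    #{i : Fin N | P i} = #{i ∈ range N | P i} := by
  rw [← card_map Fin.valEmbedding]
  congr 1
  ext i
  simp only [mem_map, mem_filter, mem_univ, true_and, Fin.valEmbedding_apply, mem_range]
  exact ⟨fun ⟨j, hj, e⟩ => e ▸ ⟨j.isLt, hj⟩, fun h => ⟨⟨i, h.1⟩, h.2, rfl⟩⟩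

section QuasiStirling

variable {k n : ℕ}

theorem mem_kQuasiStirlingSet_iff {w : Fin (k * n) → Fin n} :
    w ∈ kQuasiStirlingSet k n ↔ (∀ a, #{i | w i = a} = k) ∧ IsNoncrossing w := by
  simp [kQuasiStirlingSet, IsNoncrossing]

theorem surjective_of_mem_kQuasiStirlingSet (hk : 0 < k) {w : Fin (k * n) → Fin n}
    (hw : w ∈ kQuasiStirlingSet k n) : Function.Surjective w := fun a => by
  obtain ⟨i, hi⟩ := card_pos.1 (((mem_kQuasiStirlingSet_iff.1 hw).1 a).symm ▸ hk)
  exact ⟨i, (mem_filter.1 hi).2⟩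

theorem comp_mem_kQuasiStirlingSet (σ : Equiv.Perm (Fin n)) {w : Fin (k * n) → Fin n}
    (hw : w ∈ kQuasiStirlingSet k n) : σ ∘ w ∈ kQuasiStirlingSet k n := by
  obtain ⟨hc, hnc⟩ := mem_kQuasiStirlingSet_iff.1 hw
  refine mem_kQuasiStirlingSet_iff.2 ⟨fun a => ?_, fun i j l p hij hjl hlp hil hjp => ?_⟩
  · simpa [← Equiv.eq_symm_apply] using hc (σ.symm a)
  · simp only [Function.comp_apply, σ.apply_eq_iff_eq] at hil hjp ⊢
    exact hnc i j l p hij hjl hlp hil hjp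

theorem firstOcc_mem_ballotSets (hk : 0 < k) {w : Fin (k * n) → Fin n}
    (hw : w ∈ kQuasiStirlingSet k n) : firstOcc w ∈ ballotSets k n (k * n) := by
  refine mem_ballotSets.2 ⟨?_, isBallot_firstOcc fun a => ((mem_kQuasiStirlingSet_iff.1 hw).1 a).le⟩
  rw [card_firstOcc, image_univ_of_surjective (surjective_of_mem_kQuasiStirlingSet hk hw)]
  simp

theorem exists_mem_kQuasiStirlingSet_firstOcc_eq (hk : 0 < k) {B : Finset (Fin (k * n))}
    (hB : B ∈ ballotSets k n (k * n)) : ∃ w ∈ kQuasiStirlingSet k n, firstOcc w = B := by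
  rw [mem_ballotSets] at hB
  obtain ⟨f, hfn, hfcount, hfnc, hfB⟩ := exists_word_of_ballot hk (B.map Fin.valEmbedding) n
    (by simp) (by rw [card_map, hB.1]) fun t ht => by
      rw [filter_map, card_map]
      exact hB.2 t ht
  refine ⟨fun i => ⟨f i, hfn i i.isLt⟩, mem_kQuasiStirlingSet_iff.2 ⟨fun a => ?_, ?_⟩, ?_⟩
  · refine Eq.trans ?_ (hfcount a a.isLt)
    rw [← card_filter_fin_val_eq_card_filter_range (P := fun i => f i = a)]
    simp only [Fin.ext_iff]
  · intro i j l p hij hjl hlp hil hjp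
    simp only [Fin.ext_iff] at hil hjp ⊢
    exact hfnc i j l p hij hjl hlp p.isLt hil hjp
  · ext i
    simp only [firstOcc, mem_filter, mem_univ, true_and]
    rw [← mem_map' Fin.valEmbedding, Fin.valEmbedding_apply, ← hfB i i.isLt]
    simp only [ne_eq, Fin.ext_iff]
    exact ⟨fun h j hj => h ⟨j, hj.trans i.isLt⟩ hj, fun h j hj => h j hj⟩

theorem filter_firstOcc_eq_image_perm (hk : 0 < k) {w₀ : Fin (k * n) → Fin n}
    (hw₀ : w₀ ∈ kQuasiStirlingSet k n) :
    {w ∈ kQuasiStirlingSet k n | firstOcc w = firstOcc w₀} =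
      univ.image fun σ : Equiv.Perm (Fin n) => σ ∘ w₀ := by
  ext w
  simp only [mem_filter, mem_image, mem_univ, true_and]
  constructor
  · rintro ⟨hw, hfo⟩
    obtain ⟨hc, hnc⟩ := mem_kQuasiStirlingSet_iff.1 hw
    obtain ⟨hc₀, hnc₀⟩ := mem_kQuasiStirlingSet_iff.1 hw₀
    obtain ⟨σ, hσ⟩ := exists_perm_comp_eq_of_ker_eq (surjective_of_mem_kQuasiStirlingSet hk hw₀)
      (surjective_of_mem_kQuasiStirlingSet hk hw) <|
        eq_iff_eq_of_firstOcc_eq (fun i => hc₀ (w₀ i)) (fun i => hc (w i)) hnc₀ hnc hfo.symm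
    exact ⟨σ, hσ.symm⟩
  · rintro ⟨σ, rfl⟩
    exact ⟨comp_mem_kQuasiStirlingSet σ hw₀, firstOcc_comp σ.injective w₀⟩

theorem card_filter_firstOcc_eq_factorial (hk : 0 < k) {w₀ : Fin (k * n) → Fin n}
    (hw₀ : w₀ ∈ kQuasiStirlingSet k n) :
    #{w ∈ kQuasiStirlingSet k n | firstOcc w = firstOcc w₀} = n.factorial := by
  have hinj : Function.Injective fun σ : Equiv.Perm (Fin n) => σ ∘ w₀ := fun σ τ h =>
    Equiv.ext (congrFun ((surjective_of_mem_kQuasiStirlingSet hk hw₀).injective_comp_right h))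
  rw [filter_firstOcc_eq_image_perm hk hw₀, card_image_of_injective _ hinj, card_univ,
    Fintype.card_perm, Fintype.card_fin]

theorem card_kQuasiStirlingSet_eq_factorial_mul (hk : 0 < k) :
    #(kQuasiStirlingSet k n) = n.factorial * #(ballotSets k n (k * n)) := by
  rw [card_eq_sum_card_fiberwise fun w hw => firstOcc_mem_ballotSets hk hw, sum_const_nat,
    mul_comm]
  intro B hB
  obtain ⟨w₀, hw₀, rfl⟩ := exists_mem_kQuasiStirlingSet_firstOcc_eq hk hB
  exact card_filter_firstOcc_eq_factorial hk hw₀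

theorem card_kQuasiStirlingSet_mul (hk : 0 < k) :
    #(kQuasiStirlingSet k n) * (k * n + 1) = n.factorial * (k * n + 1).choose n := by
  rw [card_kQuasiStirlingSet_eq_factorial_mul hk, mul_assoc, card_ballotSets_castSucc hk rfl,
    card_ballotSets_mul rfl]

end QuasiStirling

theorem card_kQuasiStirling_general (k n : ℕ) (hk : 1 ≤ k) :
    (((kQuasiStirlingSet k n).card : ℚ)
        = (k * n).factorial / ((k - 1) * n + 1).factorial) ∧
    (((kQuasiStirlingSet k n).card : ℚ)
        = n.factorial * ((k * n).choose n) / ((k - 1) * n + 1)) := by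
  have hcount := card_kQuasiStirlingSet_mul (n := n) hk
  set M := (k - 1) * n + 1 with hM
  have hsub : k * n + 1 - n = M := by
    have : n ≤ k * n := Nat.le_mul_of_pos_left n hk
    rw [hM, Nat.sub_one_mul]
    omega
  have hfact := Nat.choose_mul_factorial_mul_factorial (n := k * n + 1) (k := n) (by omega)
  have hchoose := Nat.choose_mul_succ_eq (k * n) n
  rw [hsub, Nat.factorial_succ (k * n)] at hfact
  rw [hsub] at hchoose
  qify at hcount hfact hchoose
  have hpos : (k * n + 1 : ℚ) ≠ 0 := by positivity
  constructor
  · rw [eq_div_iff (by positivity)]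
    apply mul_right_cancel₀ hpos
    linear_combination (M.factorial : ℚ) * hcount + hfact
  · rw [show ((k : ℚ) - 1) * n + 1 = M by simp [hM, Nat.cast_sub hk], eq_div_iff (by positivity)]
    apply mul_right_cancel₀ hpos
    linear_combination (M : ℚ) * hcount - (n.factorial : ℚ) * hchoose

/-- The number of `k`-quasi-Stirling permutations of size `n` equals
`(k*n)! / ((k-1)*n + 1)!`, which equals `n!` times the `k`-Catalan number
`C_{n,k} = (1/((k-1)*n+1)) * choose (k*n) n`. -/
theorem card_kQuasiStirling (k n : ℕ) (hk : 1 ≤ k) (hn : 1 ≤ n) :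
    (((kQuasiStirlingSet k n).card : ℚ)
        = (k * n).factorial / ((k - 1) * n + 1).factorial) ∧
    (((kQuasiStirlingSet k n).card : ℚ)
        = n.factorial * ((k * n).choose n) / ((k - 1) * n + 1)) :=
  card_kQuasiStirling_general k n hk
end

section
/- For every 1 ≤ r ≤ n, the polynomial J_{n,r}(t), which has degree n−r, has only real, distinct, and nonpositive roots: there exist real numbers y_1 < y_2 < ⋯ < y_{n−r} ≤ 0 and a positive constant c such that J_{n,r}(t) = c·∏_{i=1}^{n−r} (t − y_i) as polynomials over ℝ. -/
/-!
Deleting the last point of an injection `f : Fin (s + 1) → Fin (n + 1)` and then swapping `f (s)`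
with `n` in the image yields a pair `(g, c)` of an injection `g : Fin s → Fin n` and a value
`c = f (s)`, bijectively. The number of excedances grows by one exactly when `s < c` or
`c = g i` for a non-excedance `i` of `g`, that is, for `n - exc g` of the `n + 1` values of `c`.
Summing, `J_{n+1,r} = (1 + n t) J_{n,r} + t (1 - t) J_{n,r}'`, and `J_{r,r} = 1`.

This operator keeps roots real, simple and negative while the degree `s` of `J_{n,r}` is below `n`.
If `p` has roots `y_0 < ⋯ < y_{s-1} < 0`, the new polynomial `q` equals `y_i (1 - y_i) p'(y_i)` at
`y_i`, so its signs there alternate; `q (0) = p (0) > 0`; and `q` has degree `s + 1` with leading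
coefficient `(n - s)` times that of `p`, which fixes its sign near `-∞`. The intermediate value
theorem then places `s + 1` roots of `q` in `(-∞, y_0), (y_0, y_1), …, (y_{s-1}, 0)`.
-/

open Finset
open scoped Classical

/-- Number of excedances of a function `f` from `{1, …, s}` to `{1, …, n}`
(0-indexed encoding): positions `i` with `f i > i`. -/
noncomputable def excCount {s n : ℕ} (f : Fin s → Fin n) : ℕ :=
  (univ.filter fun i : Fin s => (i : ℕ) < (f i : ℕ)).card

/-- `J_{n,r}(t) = ∑_f t^exc(f)`, summing over all injections
`f : {1, …, n-r} → {1, …, n}`, as a polynomial over `ℝ`. -/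
noncomputable def Jpoly (n r : ℕ) : Polynomial ℝ :=
  ∑ f ∈ univ.filter (fun f : Fin (n - r) → Fin n => Function.Injective f),
    Polynomial.X ^ excCount f

open Polynomial

lemma coeff_X_mul_derivative {R : Type*} [CommSemiring R] (p : R[X]) (j : ℕ) :
    (X * derivative p).coeff j = j * p.coeff j := by
  rcases j with _ | j
  · simp
  · rw [coeff_X_mul, coeff_derivative]
    push_cast
    ring

lemma eq_C_leadingCoeff_mul_prod_X_sub_C {R : Type*} [CommRing R] [IsDomain R] {k : ℕ}
    {q : R[X]} (hq : q.natDegree = k) {z : Fin k → R} (hz : Function.Injective z)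
    (hroot : ∀ i, q.eval (z i) = 0) : q = C q.leadingCoeff * ∏ i, (X - C (z i)) := by
  rcases eq_or_ne q 0 with rfl | hq0
  · simp
  have hlc : q.leadingCoeff ≠ 0 := leadingCoeff_ne_zero.2 hq0
  refine eq_of_degree_le_of_eval_index_eq (s := univ) hz.injOn ?_ ?_ ?_ ?_
  · simp [degree_eq_natDegree hq0, hq]
  · rw [degree_C_mul hlc, ← Lagrange.nodal_eq, Lagrange.degree_nodal, degree_eq_natDegree hq0,
      hq]
    simp
  · rw [leadingCoeff_mul, leadingCoeff_C, ← Lagrange.nodal_eq, Lagrange.nodal_monic.leadingCoeff,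
      mul_one]
  · intro i hi
    rw [hroot, eval_mul, ← Lagrange.nodal_eq, Lagrange.eval_nodal_at_node hi, mul_zero]

lemma neg_one_pow_mul_eval_derivative_prod_pos {s : ℕ} {y : Fin s → ℝ} (hy : StrictMono y)
    (i : Fin s) :
    0 < (-1) ^ (s + 1 + i : ℕ) * (derivative (∏ j, (X - C (y j)))).eval (y i) := by
  rw [← Lagrange.nodal_eq, Lagrange.eval_nodal_derivative_eval_node_eq (mem_univ i),
    Lagrange.eval_nodal, ← compl_singleton, ← Ioi_disjUnion_Iio, prod_disjUnion]
  have hIoi : ∏ j ∈ Ioi i, (y i - y j) = (-1) ^ (s - 1 - i) * ∏ j ∈ Ioi i, (y j - y i) := by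
    rw [← Fin.card_Ioi, ← prod_neg]
    simp
  have hIoi_pos : 0 < ∏ j ∈ Ioi i, (y j - y i) :=
    prod_pos fun j hj => sub_pos.2 (hy (mem_Ioi.1 hj))
  have hIio_pos : 0 < ∏ j ∈ Iio i, (y i - y j) :=
    prod_pos fun j hj => sub_pos.2 (hy (mem_Iio.1 hj))
  rw [hIoi, ← mul_assoc, ← mul_assoc, ← pow_add,
    show s + 1 + i + (s - 1 - i) = 2 * s by omega,
    pow_mul, neg_one_sq, one_pow, one_mul]
  exact mul_pos hIoi_pos hIio_pos

open Filter in
lemma eventually_atBot_neg_one_pow_natDegree_mul_eval_pos {q : ℝ[X]} (hq : 0 < q.leadingCoeff) :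
    ∀ᶠ t in atBot, 0 < (-1) ^ q.natDegree * q.eval t := by
  set ε : ℝ := (-1) ^ q.natDegree
  have hε : ε ≠ 0 := pow_ne_zero _ (by norm_num)
  have hequiv := (C ε * q).isEquivalent_atBot_lead
  rw [natDegree_C_mul hε, leadingCoeff_mul, leadingCoeff_C] at hequiv
  refine (hequiv.eventually_pos ?_).mono fun t ht => by simpa using ht
  filter_upwards [eventually_lt_atBot 0] with t ht
  rw [mul_assoc, mul_left_comm, ← mul_pow, neg_one_mul]
  exact mul_pos hq (pow_pos (neg_pos.2 ht) _)

lemma exists_mem_Ioo_eq_zero_of_mul_neg {f : ℝ → ℝ} {a b : ℝ} (hab : a ≤ b)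
    (hf : ContinuousOn f (Set.Icc a b)) (h : f a * f b < 0) : ∃ c ∈ Set.Ioo a b, f c = 0 := by
  rcases mul_neg_iff.1 h with ⟨ha, hb⟩ | ⟨ha, hb⟩
  · exact intermediate_value_Ioo' hab hf ⟨hb, ha⟩
  · exact intermediate_value_Ioo hab hf ⟨ha, hb⟩

lemma exists_strictMono_roots_of_mul_neg {k : ℕ} {f : ℝ → ℝ} (hf : Continuous f)
    {x : Fin (k + 1) → ℝ} (hx : StrictMono x)
    (halt : ∀ j : Fin k, f (x j.castSucc) * f (x j.succ) < 0) :
    ∃ z : Fin k → ℝ, StrictMono z ∧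
      ∀ j, z j ∈ Set.Ioo (x j.castSucc) (x j.succ) ∧ f (z j) = 0 := by
  choose z hz hzf using fun j => exists_mem_Ioo_eq_zero_of_mul_neg
    (hx (Fin.castSucc_lt_succ (i := j))).le hf.continuousOn (halt j)
  refine ⟨z, fun a b hab => ?_, fun j => ⟨hz j, hzf j⟩⟩
  calc z a < x a.succ := (hz a).2
    _ ≤ x b.castSucc := hx.monotone (Fin.succ_le_castSucc_iff.2 hab)
    _ < z b := (hz b).1

lemma mul_neg_of_neg_one_pow_mul_pos {a b : ℝ} {N : ℕ} (ha : 0 < (-1) ^ N * a)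
    (hb : 0 < (-1) ^ (N + 1) * b) : a * b < 0 := by
  have hsq : ((-1 : ℝ) ^ N) ^ 2 = 1 := by rw [← pow_mul, pow_mul', neg_one_sq, one_pow]
  have hprod : ((-1) ^ N * a) * ((-1) ^ (N + 1) * b) = -(a * b) := by
    rw [pow_succ]
    linear_combination (-(a * b)) * hsq
  linarith [mul_pos ha hb]

lemma Fin.strictMono_snoc {α : Type*} [Preorder α] {n : ℕ} {f : Fin n → α} {a : α}
    (hf : StrictMono f) (ha : ∀ i, f i < a) : StrictMono (Fin.snoc f a : Fin (n + 1) → α) := by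
  rw [← Fin.insertNth_last', Fin.strictMono_insertNth_iff]
  exact ⟨hf, fun i _ => ha i, fun i h => absurd h (not_le.2 (Fin.castSucc_lt_last i))⟩

noncomputable def excStep (m : ℝ) : ℝ[X] →ₗ[ℝ] ℝ[X] :=
  LinearMap.mulLeft ℝ (1 + C m * X) + LinearMap.mulLeft ℝ (X - X ^ 2) ∘ₗ derivative

lemma excStep_apply (m : ℝ) (p : ℝ[X]) :
    excStep m p = (1 + C m * X) * p + (X - X ^ 2) * derivative p := rfl

lemma excStep_X_pow (m : ℝ) (k : ℕ) :
    excStep m (X ^ k) = C (k + 1 : ℝ) * X ^ k + C (m - k) * X ^ (k + 1) := by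
  rcases k with _ | k
  · simp [excStep_apply]
  · simp [excStep_apply]; ring

lemma coeff_excStep_succ (m : ℝ) (p : ℝ[X]) (j : ℕ) :
    (excStep m p).coeff (j + 1) = (j + 2) * p.coeff (j + 1) + (m - j) * p.coeff j := by
  rw [show excStep m p = p + C m * (X * p) + X * derivative p - X * (X * derivative p) by
    rw [excStep_apply]; ring]
  simp only [coeff_add, coeff_sub, coeff_C_mul, coeff_X_mul, coeff_X_mul_derivative,
    coeff_derivative]
  ring

lemma natDegree_excStep_le (m : ℝ) (p : ℝ[X]) :
    (excStep m p).natDegree ≤ p.natDegree + 1 := by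
  refine natDegree_le_iff_coeff_eq_zero.2 fun N hN => ?_
  obtain ⟨j, rfl⟩ : ∃ j, N = j + 1 := ⟨N - 1, by omega⟩
  rw [coeff_excStep_succ, coeff_eq_zero_of_natDegree_lt (by omega),
    coeff_eq_zero_of_natDegree_lt (p := p) (n := j) (by omega)]
  ring

lemma coeff_excStep_natDegree_succ (m : ℝ) (p : ℝ[X]) :
    (excStep m p).coeff (p.natDegree + 1) = (m - p.natDegree) * p.leadingCoeff := by
  rw [coeff_excStep_succ, coeff_eq_zero_of_natDegree_lt (Nat.lt_succ_self _), leadingCoeff]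
  ring

lemma natDegree_excStep {m : ℝ} {p : ℝ[X]} (h : (m - p.natDegree) * p.leadingCoeff ≠ 0) :
    (excStep m p).natDegree = p.natDegree + 1 :=
  natDegree_eq_of_le_of_coeff_ne_zero (natDegree_excStep_le m p)
    (by rwa [coeff_excStep_natDegree_succ])

lemma leadingCoeff_excStep {m : ℝ} {p : ℝ[X]} (h : (m - p.natDegree) * p.leadingCoeff ≠ 0) :
    (excStep m p).leadingCoeff = (m - p.natDegree) * p.leadingCoeff := by
  rw [leadingCoeff, natDegree_excStep h, coeff_excStep_natDegree_succ]

lemma eval_excStep_of_eval_eq_zero {m t : ℝ} {p : ℝ[X]} (ht : p.eval t = 0) :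
    (excStep m p).eval t = (t - t ^ 2) * (derivative p).eval t := by
  simp [excStep_apply, ht]

lemma eval_excStep_zero (m : ℝ) (p : ℝ[X]) : (excStep m p).eval 0 = p.eval 0 := by
  simp [excStep_apply]

lemma natDegree_and_leadingCoeff_excStep_C_mul_prod {s : ℕ} {m c : ℝ} (y : Fin s → ℝ)
    (h : (m - s) * c ≠ 0) :
    (excStep m (C c * ∏ i, (X - C (y i)))).natDegree = s + 1 ∧
      (excStep m (C c * ∏ i, (X - C (y i)))).leadingCoeff = (m - s) * c := by
  have hc : c ≠ 0 := right_ne_zero_of_mul h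
  have hdeg : (C c * ∏ i, (X - C (y i))).natDegree = s := by
    rw [natDegree_C_mul hc, ← Lagrange.nodal_eq, Lagrange.natDegree_nodal, card_fin]
  have hlead : (C c * ∏ i, (X - C (y i))).leadingCoeff = c := by
    rw [leadingCoeff_mul, leadingCoeff_C, ← Lagrange.nodal_eq, Lagrange.nodal_monic.leadingCoeff,
      mul_one]
  have h' : (m - (C c * ∏ i, (X - C (y i))).natDegree) *
      (C c * ∏ i, (X - C (y i))).leadingCoeff ≠ 0 := by
    rwa [hdeg, hlead]
  rw [natDegree_excStep h', leadingCoeff_excStep h', hdeg, hlead]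
  exact ⟨rfl, rfl⟩

def HasSimpleNegRoots (p : ℝ[X]) (k : ℕ) : Prop :=
  ∃ (y : Fin k → ℝ) (c : ℝ), StrictMono y ∧ (∀ i, y i < 0) ∧ 0 < c ∧
    p = C c * ∏ i, (X - C (y i))

lemma hasSimpleNegRoots_one : HasSimpleNegRoots 1 0 :=
  ⟨Fin.elim0, 1, fun i => i.elim0, fun i => i.elim0, one_pos, by simp⟩

lemma neg_one_pow_mul_eval_excStep_at_root_pos {s : ℕ} {y : Fin s → ℝ} (hy : StrictMono y)
    (hneg : ∀ i, y i < 0) {c : ℝ} (hc : 0 < c) (m : ℝ) (i : Fin s) :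
    0 < (-1) ^ (s + i : ℕ) * (excStep m (C c * ∏ j, (X - C (y j)))).eval (y i) := by
  have hroot : (C c * ∏ j, (X - C (y j))).eval (y i) = 0 := by
    rw [eval_mul, ← Lagrange.nodal_eq, Lagrange.eval_nodal_at_node (mem_univ i), mul_zero]
  have hw : 0 < y i ^ 2 - y i := by nlinarith [hneg i]
  have hP' := neg_one_pow_mul_eval_derivative_prod_pos hy i
  rw [eval_excStep_of_eval_eq_zero hroot, derivative_C_mul, eval_mul, eval_C]
  rw [show s + 1 + (i : ℕ) = s + i + 1 by omega, pow_succ] at hP'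
  linarith [mul_pos (mul_pos hw hc) hP']

open Filter in
theorem HasSimpleNegRoots.excStep {p : ℝ[X]} {s : ℕ} {m : ℝ} (hp : HasSimpleNegRoots p s)
    (hsm : s < m) : HasSimpleNegRoots (excStep m p) (s + 1) := by
  obtain ⟨y, c, hy, hneg, hc, rfl⟩ := hp
  have hlc : 0 < (m - s) * c := mul_pos (sub_pos.2 hsm) hc
  set q := _root_.excStep m (C c * ∏ i, (X - C (y i)))
  obtain ⟨hqdeg, hqlc⟩ := natDegree_and_leadingCoeff_excStep_C_mul_prod y hlc.ne'
  obtain ⟨t₀, ht₀, ht₀y, ht₀neg⟩ :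
      ∃ t₀, 0 < (-1) ^ (s + 1) * q.eval t₀ ∧ (∀ i, t₀ < y i) ∧ t₀ < 0 :=
    ((hqdeg ▸ eventually_atBot_neg_one_pow_natDegree_mul_eval_pos (hqlc ▸ hlc)).and
      ((eventually_all.2 fun i => eventually_lt_atBot (y i)).and (eventually_lt_atBot 0))).exists
  set x : Fin (s + 2) → ℝ := Fin.cons t₀ (Fin.snoc y 0)
  have hx : StrictMono x := by
    refine Fin.strictMono_cons.2 ⟨fun j => ?_, Fin.strictMono_snoc hy hneg⟩
    induction j using Fin.lastCases <;> simp [ht₀neg, ht₀y]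
  have hxsign (j : Fin (s + 2)) : 0 < (-1) ^ (s + 1 + j : ℕ) * q.eval (x j) := by
    induction j using Fin.cases with
    | zero => simpa [x] using ht₀
    | succ j =>
      induction j using Fin.lastCases with
      | last =>
        have hq0 : 0 < q.eval 0 := by
          rw [eval_excStep_zero, eval_mul, eval_C, ← Lagrange.nodal_eq, Lagrange.eval_nodal]
          exact mul_pos hc (prod_pos fun i _ => by linarith [hneg i])
        simpa [x, ← two_mul, pow_mul] using hq0
      | cast i =>
        have hqy := neg_one_pow_mul_eval_excStep_at_root_pos hy hneg hc m i
        simpa [x, show s + 1 + ((i : ℕ) + 1) = s + i + 2 by omega, pow_add] using hqy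
  obtain ⟨z, hz, hzx⟩ := exists_strictMono_roots_of_mul_neg q.continuous hx fun j =>
    mul_neg_of_neg_one_pow_mul_pos (hxsign j.castSucc) (hxsign j.succ)
  refine ⟨z, (m - s) * c, hz, fun j => (hzx j).1.2.trans_le ?_, hlc, ?_⟩
  · induction j using Fin.lastCases <;> simp [x, (hneg _).le]
  · rw [← hqlc]
    exact eq_C_leadingCoeff_mul_prod_X_sub_C hqdeg hz.injective fun j => (hzx j).2

section Insertion

variable {s n : ℕ}

def insertLast (g : Fin s → Fin n) (c : Fin (n + 1)) : Fin (s + 1) → Fin (n + 1) :=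
  Fin.snoc (fun i => Equiv.swap c (Fin.last n) (g i).castSucc) c

@[simp] lemma insertLast_last (g : Fin s → Fin n) (c : Fin (n + 1)) :
    insertLast g c (Fin.last s) = c :=
  Fin.snoc_last ..

@[simp] lemma insertLast_castSucc (g : Fin s → Fin n) (c : Fin (n + 1)) (i : Fin s) :
    insertLast g c i.castSucc = Equiv.swap c (Fin.last n) (g i).castSucc :=
  Fin.snoc_castSucc ..

lemma insertLast_castSucc_ne (g : Fin s → Fin n) (c : Fin (n + 1)) (i : Fin s) :
    insertLast g c i.castSucc ≠ c := by
  rw [insertLast_castSucc, Ne, Equiv.swap_apply_eq_iff, Equiv.swap_apply_left]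
  exact (Fin.castSucc_lt_last _).ne

lemma injective_insertLast {g : Fin s → Fin n} (hg : Function.Injective g) (c : Fin (n + 1)) :
    Function.Injective (insertLast g c) := by
  intro a b hab
  induction a using Fin.lastCases <;> induction b using Fin.lastCases
  · rfl
  · exact absurd (hab.symm.trans (insertLast_last g c)) (insertLast_castSucc_ne g c _)
  · exact absurd (hab.trans (insertLast_last g c)) (insertLast_castSucc_ne g c _)
  · simp only [insertLast_castSucc, EmbeddingLike.apply_eq_iff_eq, Fin.castSucc_inj] at hab
    rw [hg hab]

lemma insertLast_inj {g g' : Fin s → Fin n} {c c' : Fin (n + 1)}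
    (h : insertLast g c = insertLast g' c') : g = g' ∧ c = c' := by
  obtain rfl : c = c' := by simpa using congrFun h (Fin.last s)
  refine ⟨funext fun i => ?_, rfl⟩
  simpa using congrFun h i.castSucc

lemma exists_insertLast_eq {f : Fin (s + 1) → Fin (n + 1)} (hf : Function.Injective f) :
    ∃ g : Fin s → Fin n, Function.Injective g ∧ insertLast g (f (Fin.last s)) = f := by
  set c := f (Fin.last s)
  have hne (i : Fin s) : Equiv.swap c (Fin.last n) (f i.castSucc) ≠ Fin.last n := by
    rw [Ne, Equiv.swap_apply_eq_iff, Equiv.swap_apply_right]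
    exact fun h => (Fin.castSucc_lt_last i).ne (hf h)
  refine ⟨fun i => (Equiv.swap c (Fin.last n) (f i.castSucc)).castPred (hne i), ?_, ?_⟩
  · intro i j hij
    simpa [hf.eq_iff] using hij
  · funext i
    induction i using Fin.lastCases <;> simp [c]

lemma excCount_le (g : Fin s → Fin n) : excCount g ≤ s :=
  (card_filter_le _ _).trans (card_fin s).le

def nonExcValues (g : Fin s → Fin n) : Finset (Fin (n + 1)) :=
  (univ.filter fun i => (g i : ℕ) ≤ i).image fun i => (g i).castSucc

lemma val_lt_of_mem_nonExcValues {g : Fin s → Fin n} {c : Fin (n + 1)}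
    (hc : c ∈ nonExcValues g) : (c : ℕ) < s := by
  obtain ⟨i, hi, rfl⟩ := mem_image.1 hc
  simpa using (mem_filter.1 hi).2.trans_lt i.isLt

lemma card_nonExcValues {g : Fin s → Fin n} (hg : Function.Injective g) :
    #(nonExcValues g) = s - excCount g := by
  rw [nonExcValues, card_image_of_injective _
    (show Function.Injective fun i => (g i).castSucc from (Fin.castSucc_injective _).comp hg),
    excCount]
  have := card_filter_add_card_filter_not (s := univ) fun i : Fin s => (i : ℕ) < g i
  simp only [not_lt, card_univ, Fintype.card_fin] at this
  omega

lemma sum_ite_nonExc_castSucc_eq {g : Fin s → Fin n} (hg : Function.Injective g)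
    (c : Fin (n + 1)) :
    (∑ i, if (g i : ℕ) ≤ i ∧ (g i).castSucc = c then 1 else 0 : ℕ) =
      if c ∈ nonExcValues g then 1 else 0 := by
  rw [nonExcValues, ← sum_ite_eq' _ c (fun _ => (1 : ℕ)), sum_image, sum_filter]
  · exact sum_congr rfl fun i _ => ite_and ..
  · exact ((Fin.castSucc_injective _).comp hg).injOn

def excIncrSet (g : Fin s → Fin n) : Finset (Fin (n + 1)) :=
  univ.filter (fun c => s < (c : ℕ)) ∪ nonExcValues g

lemma card_excIncrSet {g : Fin s → Fin n} (hg : Function.Injective g) :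
    #(excIncrSet g) = n - excCount g := by
  have hsn : s ≤ n := Fin.le_of_injective g hg
  have hdisj : Disjoint (univ.filter fun c : Fin (n + 1) => s < (c : ℕ)) (nonExcValues g) :=
    disjoint_left.2 fun c hc hc' => (mem_filter.1 hc).2.not_gt (val_lt_of_mem_nonExcValues hc')
  have hfront : #(univ.filter fun c : Fin (n + 1) => s < (c : ℕ)) = n - s := by
    rw [show univ.filter (fun c : Fin (n + 1) => s < (c : ℕ)) = Ioi ⟨s, by omega⟩ by
      ext; simp [Fin.lt_def], Fin.card_Ioi]
    simp
  rw [excIncrSet, card_union_of_disjoint hdisj, hfront, card_nonExcValues hg]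
  have := excCount_le g
  omega

lemma excCount_insertLast {g : Fin s → Fin n} (hg : Function.Injective g) (c : Fin (n + 1)) :
    excCount (insertLast g c) = excCount g + if c ∈ excIncrSet g then 1 else 0 := by
  have hsn : s ≤ n := Fin.le_of_injective g hg
  have hpoint (i : Fin s) : (if (i : ℕ) < insertLast g c i.castSucc then 1 else 0 : ℕ) =
      (if (i : ℕ) < g i then 1 else 0) +
        if (g i : ℕ) ≤ i ∧ (g i).castSucc = c then 1 else 0 := by
    by_cases h : (g i).castSucc = c
    · rw [insertLast_castSucc, ← h, Equiv.swap_apply_left]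
      have hin : (i : ℕ) < n := by omega
      by_cases hi : (i : ℕ) < g i
      · simp [hin, hi, not_le.2 hi]
      · simp [hin, hi, le_of_not_gt hi]
    · rw [insertLast_castSucc, Equiv.swap_apply_of_ne_of_ne h (Fin.castSucc_lt_last _).ne]
      simp [h]
  rw [excCount, excCount, card_filter, card_filter, Fin.sum_univ_castSucc]
  simp only [Fin.val_castSucc, hpoint, sum_add_distrib, sum_ite_nonExc_castSucc_eq hg,
    insertLast_last, Fin.val_last, add_assoc, excIncrSet, mem_union, mem_filter, mem_univ, true_and]
  by_cases h2 : c ∈ nonExcValues g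
  · simp [h2, (val_lt_of_mem_nonExcValues h2).le]
  · by_cases h1 : s < (c : ℕ) <;> simp [h1, h2]

lemma sum_X_pow_excCount_insertLast {g : Fin s → Fin n} (hg : Function.Injective g) :
    ∑ c, (X : ℝ[X]) ^ excCount (insertLast g c) = excStep n (X ^ excCount g) := by
  have hkn : excCount g ≤ n := (excCount_le g).trans (Fin.le_of_injective g hg)
  have hsplit (c : Fin (n + 1)) :
      (X : ℝ[X]) ^ (excCount g + if c ∈ excIncrSet g then 1 else 0) =
        X ^ excCount g +
          if c ∈ excIncrSet g then X ^ (excCount g + 1) - X ^ excCount g else 0 := by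
    split_ifs <;> simp
  simp_rw [excCount_insertLast hg, hsplit, sum_add_distrib, sum_ite_mem, univ_inter, sum_const,
    card_univ, Fintype.card_fin, card_excIncrSet hg, excStep_X_pow, nsmul_eq_mul, Nat.cast_sub hkn]
  simp only [Nat.cast_add, Nat.cast_one, map_natCast, map_sub, map_add, map_one]
  ring

end Insertion

lemma sum_X_pow_excCount_succ (s n : ℕ) :
    ∑ f ∈ univ.filter (fun f : Fin (s + 1) → Fin (n + 1) => Function.Injective f),
        (X : ℝ[X]) ^ excCount f =
      excStep n (∑ g ∈ univ.filter (fun g : Fin s → Fin n => Function.Injective g),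
        X ^ excCount g) := by
  rw [map_sum, ← sum_congr rfl fun g hg => sum_X_pow_excCount_insertLast (mem_filter.1 hg).2,
    ← sum_product']
  refine (sum_bij (fun p _ => insertLast p.1 p.2) ?_ ?_ ?_ fun _ _ => rfl).symm
  · simp only [mem_product, mem_filter, mem_univ, true_and, and_true]
    exact fun p hp => injective_insertLast hp p.2
  · exact fun p _ q _ h => Prod.ext_iff.2 (insertLast_inj h)
  · intro f hf
    obtain ⟨g, hg, hgf⟩ := exists_insertLast_eq (mem_filter.1 hf).2
    exact ⟨(g, f (Fin.last s)), by simpa using hg, hgf⟩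

lemma Jpoly_succ {n r : ℕ} (h : r ≤ n) : Jpoly (n + 1) r = excStep n (Jpoly n r) := by
  rw [Jpoly, Jpoly, show n + 1 - r = n - r + 1 by omega, sum_X_pow_excCount_succ]

lemma Jpoly_self (r : ℕ) : Jpoly r r = 1 := by
  rw [Jpoly, Nat.sub_self]
  simp [Function.injective_of_subsingleton, excCount]

lemma hasSimpleNegRoots_Jpoly {r : ℕ} (hr : 1 ≤ r) (s : ℕ) :
    HasSimpleNegRoots (Jpoly (s + r) r) s := by
  induction s with
  | zero => simpa [Jpoly_self] using hasSimpleNegRoots_one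
  | succ s ih =>
    rw [show s + 1 + r = s + r + 1 by omega, Jpoly_succ (by omega)]
    exact ih.excStep (by exact_mod_cast (by omega : s < s + r))

/-- For `1 ≤ r ≤ n`, the polynomial `J_{n,r}(t)` has only real, distinct,
nonpositive roots: `J_{n,r}(t) = c · ∏_{i=1}^{n-r} (t - y_i)` with
`y_1 < ⋯ < y_{n-r} ≤ 0` and `c > 0`. -/
theorem Jpoly_real_roots (n r : ℕ) (hr : 1 ≤ r) (hrn : r ≤ n) :
    ∃ (y : Fin (n - r) → ℝ) (c : ℝ), StrictMono y ∧ (∀ i, y i ≤ 0) ∧ 0 < c ∧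
      Jpoly n r
        = Polynomial.C c * ∏ i : Fin (n - r), (Polynomial.X - Polynomial.C (y i)) := by
  obtain ⟨y, c, hy, hneg, hc, hJ⟩ := hasSimpleNegRoots_Jpoly hr (n - r)
  rw [Nat.sub_add_cancel hrn] at hJ
  exact ⟨y, c, hy, fun i => (hneg i).le, hc, hJ⟩
end

section
/- For every n ≥ 1, the total number of plateaus over all quasi-Stirling permutations of size n satisfies 2·∑_{w ∈ Q̄_n} plat(w) = (n+1)·(2n)!/(n+1)!; equivalently, the average number of plateaus of an element of Q̄_n is (n+1)/2. -/
open Finset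
open scoped Classical

/-- Number of plateaus of a word `w` of length `N`: positions `i` (1-indexed,
`1 ≤ i ≤ N-1`) whose letter equals the next letter. -/
noncomputable def platW {α : Type*} [DecidableEq α] {N : ℕ} (w : Fin N → α) : ℕ :=
  (univ.filter fun i : Fin N =>
    ∃ h : (i : ℕ) + 1 < N, w ⟨(i : ℕ) + 1, h⟩ = w i).card

/-! Deleting a plateau `aa` from a quasi-Stirling permutation on the letter set `A` leaves one on
`A \ {a}`, and conversely `aa` can be inserted into any of the `2|A| - 1` gaps of a word on
`A \ {a}`, so the plateaus of `Q̄_n` are counted by `n (2n - 1) |Q̄_{n-1}|`. Splitting a word at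
the second occurrence of its first letter, `w = a u a v`, where `u` and `v` use complementary
sets of the remaining letters, gives `|Q̄_n| = n ∑_k C(n-1, k) |Q̄_k| |Q̄_{n-1-k}|`, hence
`|Q̄_n| = n! Cat_n = (2n)!/(n+1)!`. -/

open scoped List Nat

namespace QuasiStirling

variable {α : Type*}

def Noncrossing (w : List α) : Prop :=
  ∀ a b, a ≠ b → ¬ [a, b, a, b] <+ w

theorem cons_sublist_of_cons_sublist_append {c : α} {l u v : List α} (h : c :: l <+ u ++ v)
    (hc : c ∉ u) : c :: l <+ v := by
  induction u with
  | nil => exact h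
  | cons x u ih =>
    rcases List.sublist_cons_iff.1 h with h | ⟨r, hr, -⟩
    · exact ih h (fun hu => hc (List.mem_cons_of_mem x hu))
    · exact absurd (List.cons.inj hr).1 (fun hcx => hc (hcx ▸ List.mem_cons_self))

theorem append_singleton_sublist_of_sublist_append {c : α} {l u v : List α}
    (h : l ++ [c] <+ u ++ v) (hc : c ∉ v) : l ++ [c] <+ u := by
  rw [← List.reverse_sublist] at h ⊢
  simp only [List.reverse_append, List.reverse_cons, List.reverse_nil, List.nil_append,
    List.singleton_append] at h ⊢
  exact cons_sublist_of_cons_sublist_append h (by simpa using hc)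

namespace Noncrossing

theorem sublist {v w : List α} (hw : Noncrossing w) (h : v <+ w) : Noncrossing v :=
  fun a b hab hv => hw a b hab (hv.trans h)

theorem append {u v : List α} (hu : Noncrossing u) (hv : Noncrossing v) (huv : u.Disjoint v) :
    Noncrossing (u ++ v) := by
  intro p q hpq h
  by_cases hpu : p ∈ u
  · by_cases hqu : q ∈ u
    · exact hu p q hpq (append_singleton_sublist_of_sublist_append (l := [p, q, p]) h
        (huv hqu))
    · have : [q, p, q] <+ v :=
        cons_sublist_of_cons_sublist_append ((List.sublist_cons_self p _).trans h) hqu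
      exact huv hpu (this.subset (by simp))
  · exact hv p q hpq (cons_sublist_of_cons_sublist_append h hpu)

/-- A crossing `p q p q` through `a` contains both `a b a` and `b a b` for its other letter `b`. -/
theorem of_filter_ne [DecidableEq α] {w : List α} (a : α)
    (hw : Noncrossing (w.filter (· ≠ a)))
    (h : ∀ b, b ≠ a → [a, b, a] <+ w → [b, a, b] <+ w → False) : Noncrossing w := by
  intro p q hpq hpat
  have hpqp : [p, q, p] <+ w := (List.sublist_append_left [p, q, p] [q]).trans hpat
  have hqpq : [q, p, q] <+ w := (List.sublist_cons_self p _).trans hpat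
  by_cases hpa : p = a
  · subst hpa; exact h q (Ne.symm hpq) hpqp hqpq
  by_cases hqa : q = a
  · subst hqa; exact h p hpq hqpq hpqp
  refine hw p q hpq ?_
  simpa [hpa, hqa] using hpat.filter (· ≠ a)

end Noncrossing

theorem filter_ne_eq_self [DecidableEq α] {x : List α} {a : α} (hx : a ∉ x) :
    x.filter (· ≠ a) = x :=
  List.filter_eq_self.2 fun c hc => by simpa using ne_of_mem_of_not_mem hc hx

theorem noncrossing_append_cons_cons [DecidableEq α] {x y : List α} {a : α}
    (h : Noncrossing (x ++ y)) (hx : a ∉ x) (hy : a ∉ y) :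
    Noncrossing (x ++ a :: a :: y) := by
  refine Noncrossing.of_filter_ne a ?_ fun b hba haba _ => ?_
  · rwa [List.filter_append, filter_ne_eq_self hx, List.filter_cons_of_neg (by simp),
      List.filter_cons_of_neg (by simp), filter_ne_eq_self hy]
  · have : [b, a] <+ a :: y :=
      List.cons_sublist_cons.1 (cons_sublist_of_cons_sublist_append haba hx)
    exact hy ((cons_sublist_of_cons_sublist_append (u := [a]) this (by simpa using hba)).subset
      (by simp))

theorem noncrossing_cons_append_cons [DecidableEq α] {u v : List α} {a : α}
    (hu : Noncrossing u) (hv : Noncrossing v) (huv : u.Disjoint v) (hau : a ∉ u) (hav : a ∉ v) :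
    Noncrossing (a :: (u ++ a :: v)) := by
  refine Noncrossing.of_filter_ne a ?_ fun b hba _ hbab => ?_
  · rw [List.filter_cons_of_neg (by simp), List.filter_append, filter_ne_eq_self hau,
      List.filter_cons_of_neg (by simp), filter_ne_eq_self hav]
    exact hu.append hv huv
  have hb : b ∉ [a] := by simpa using hba
  have hbab : [b, a, b] <+ u ++ a :: v := cons_sublist_of_cons_sublist_append (u := [a]) hbab hb
  have hbu : b ∈ u := by
    by_contra hbu
    have := cons_sublist_of_cons_sublist_append (u := [a])
      (cons_sublist_of_cons_sublist_append hbab hbu) hb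
    exact hav (this.subset (by simp))
  have hbv : b ∈ v := by
    by_contra hbv
    rw [List.append_cons] at hbab
    have := append_singleton_sublist_of_sublist_append (l := [b, a])
      (append_singleton_sublist_of_sublist_append (l := [b, a]) hbab hbv) hb
    exact hau (this.subset (by simp))
  exact huv hbu hbv

theorem noncrossing_ofFn_iff {β : Type*} {N : ℕ} (w : Fin N → β) :
    Noncrossing (List.ofFn w) ↔ ∀ i j k l : Fin N, i < j → j < k → k < l →
      w i = w k → w j = w l → w i = w j := by
  rw [List.ofFn_eq_map]
  constructor
  · intro h i j k l hij hjk hkl hik hjl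
    by_contra hne
    have hpw : [i, j, k, l].Pairwise (· < ·) := by
      simp only [List.pairwise_cons, List.mem_cons, List.not_mem_nil]
      grind
    have hsub : [i, j, k, l] <+ List.finRange N :=
      List.sublist_of_subperm_of_pairwise
        (List.Nodup.subperm (hpw.imp ne_of_lt) fun x _ => List.mem_finRange x) hpw
        (List.pairwise_lt_finRange N)
    exact h (w i) (w j) hne (by simpa [hik, hjl] using hsub.map w)
  · intro h a b hab hsub
    obtain ⟨l', hl', hmap⟩ := List.sublist_map_iff.1 hsub
    have hpw := (List.pairwise_lt_finRange N).sublist hl'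
    rcases l' with _ | ⟨i, _ | ⟨j, _ | ⟨k, _ | ⟨l, _ | ⟨_, _⟩⟩⟩⟩⟩ <;>
      simp only [List.map_cons, List.map_nil, List.cons.injEq, List.nil_eq, List.cons_ne_self,
        reduceCtorEq, and_false, and_true] at hmap
    obtain ⟨rfl, rfl, hk, hl⟩ := hmap
    simp only [List.pairwise_cons, List.mem_cons, List.not_mem_nil] at hpw
    exact hab (h i j k l (by grind) (by grind) (by grind) hk hl)

theorem take_append_cons_cons_drop_inj {u u' : List α} {a a' : α} {i : ℕ} (hi : i ≤ u.length)
    (hi' : i ≤ u'.length)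
    (h : u.take i ++ a :: a :: u.drop i = u'.take i ++ a' :: a' :: u'.drop i) :
    a = a' ∧ u = u' := by
  obtain ⟨htake, hdrop⟩ := List.append_inj h
    ((List.length_take_of_le hi).trans (List.length_take_of_le hi').symm)
  simp only [List.cons.injEq] at hdrop
  obtain ⟨rfl, -, hdrop⟩ := hdrop
  exact ⟨rfl, by rw [← List.take_append_drop i u, htake, hdrop, List.take_append_drop]⟩

theorem coe_append_cons (u v : List α) (a : α) :
    (↑(u ++ a :: v) : Multiset α) = a ::ₘ (↑u + ↑v) := by
  rw [Multiset.coe_add, Multiset.cons_coe]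
  exact Multiset.coe_eq_coe.2 List.perm_middle

theorem eq_filter_val_add_filter_val {s t : Multiset α} {E : Finset α} (p : α → Prop)
    [DecidablePred p] (h : s + t = E.val + E.val) (hs : ∀ x ∈ s, p x) (ht : ∀ x ∈ t, ¬ p x) :
    s = (E.filter p).val + (E.filter p).val := by
  have := congrArg (Multiset.filter p) h
  rwa [Multiset.filter_add, Multiset.filter_add, Multiset.filter_eq_self.2 hs,
    Multiset.filter_eq_nil.2 ht, add_zero, ← Finset.filter_val] at this

theorem sum_range_choose_mul_factorial_mul_catalan (m : ℕ) :
    ∑ k ∈ Finset.range (m + 1), m.choose k * (k ! * catalan k * ((m - k)! * catalan (m - k))) =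
      m ! * catalan (m + 1) := by
  rw [catalan_succ', Finset.Nat.sum_antidiagonal_eq_sum_range_succ_mk, Finset.mul_sum]
  refine Finset.sum_congr rfl fun k hk => ?_
  rw [← Nat.choose_mul_factorial_mul_factorial (Finset.mem_range_succ_iff.1 hk)]
  ring

theorem factorial_mul_catalan_mul_factorial_succ (m : ℕ) :
    m ! * catalan m * (m + 1)! = (2 * m)! := by
  have h := Nat.choose_mul_factorial_mul_factorial (show m ≤ 2 * m by omega)
  rw [show 2 * m - m = m by omega, ← Nat.centralBinom, ← succ_mul_catalan_eq_centralBinom] at h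
  rw [← h, Nat.factorial_succ]
  ring

section

variable [DecidableEq α]

noncomputable def quasiStirlingWords (A : Finset α) : Finset (List α) :=
  {w ∈ (A.toList ++ A.toList).permutations.toFinset | Noncrossing w}

variable {A : Finset α} {w : List α}

theorem mem_quasiStirlingWords :
    w ∈ quasiStirlingWords A ↔ (w : Multiset α) = A.val + A.val ∧ Noncrossing w := by
  simp [quasiStirlingWords, List.mem_permutations, ← Multiset.coe_eq_coe, ← Multiset.coe_add]

theorem mem_iff_of_mem_quasiStirlingWords (hw : w ∈ quasiStirlingWords A) {a : α} :
    a ∈ w ↔ a ∈ A := by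
  rw [← Multiset.mem_coe, (mem_quasiStirlingWords.1 hw).1, Multiset.mem_add, Finset.mem_val,
    or_self]

theorem notMem_of_mem_quasiStirlingWords (hw : w ∈ quasiStirlingWords A) {a : α} (ha : a ∉ A) :
    a ∉ w :=
  fun h => ha ((mem_iff_of_mem_quasiStirlingWords hw).1 h)

theorem toFinset_of_mem_quasiStirlingWords (hw : w ∈ quasiStirlingWords A) : w.toFinset = A := by
  ext a
  rw [List.mem_toFinset, mem_iff_of_mem_quasiStirlingWords hw]

theorem length_of_mem_quasiStirlingWords (hw : w ∈ quasiStirlingWords A) :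
    w.length = 2 * #A := by
  rw [← Multiset.coe_card, (mem_quasiStirlingWords.1 hw).1, Multiset.card_add, two_mul,
    Finset.card_val]

theorem quasiStirlingWords_empty : quasiStirlingWords (∅ : Finset α) = {[]} := by
  ext w
  simp only [mem_quasiStirlingWords, Finset.empty_val, add_zero, Multiset.coe_eq_zero,
    Finset.mem_singleton, and_iff_left_iff_imp]
  rintro rfl a b _ h
  simpa using h.length_le

theorem val_add_val_eq_cons_cons {a : α} (ha : a ∈ A) :
    A.val + A.val = a ::ₘ a ::ₘ ((A.erase a).val + (A.erase a).val) := by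
  rw [Finset.erase_val, ← Multiset.add_cons, ← Multiset.cons_add, Multiset.cons_erase ha]

theorem append_cons_cons_mem_quasiStirlingWords_iff {x y : List α} {a : α} (ha : a ∈ A) :
    x ++ a :: a :: y ∈ quasiStirlingWords A ↔ x ++ y ∈ quasiStirlingWords (A.erase a) := by
  have hperm : (↑(x ++ a :: a :: y) : Multiset α) = a ::ₘ a ::ₘ ↑(x ++ y) :=
    Multiset.coe_eq_coe.2 (List.perm_middle.trans (List.perm_middle.cons a))
  rw [mem_quasiStirlingWords, mem_quasiStirlingWords, hperm, val_add_val_eq_cons_cons ha,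
    Multiset.cons_inj_right, Multiset.cons_inj_right]
  refine and_congr_right fun hxy => ⟨fun h => h.sublist ?_, fun h => ?_⟩
  · simp
  · have ha' : a ∉ x ++ y := fun hmem => by
      have := Multiset.mem_coe.2 hmem
      rw [hxy, Multiset.mem_add, or_self, Finset.mem_val] at this
      exact Finset.notMem_erase a A this
    rw [List.mem_append, not_or] at ha'
    exact noncrossing_append_cons_cons h ha'.1 ha'.2

theorem cons_append_cons_mem_quasiStirlingWords {a : α} {B : Finset α} {u v : List α}
    (ha : a ∈ A) (hB : B ⊆ A.erase a) (hu : u ∈ quasiStirlingWords B)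
    (hv : v ∈ quasiStirlingWords (A.erase a \ B)) : a :: (u ++ a :: v) ∈ quasiStirlingWords A := by
  have hsplit : B.val + (A.erase a \ B).val = (A.erase a).val := by
    rw [Finset.sdiff_val, add_tsub_cancel_of_le (Finset.val_le_iff.2 hB)]
  have hau := notMem_of_mem_quasiStirlingWords hu fun h => Finset.notMem_erase a A (hB h)
  have hav := notMem_of_mem_quasiStirlingWords hv fun h =>
    Finset.notMem_erase a A (Finset.sdiff_subset h)
  have huv : u.Disjoint v := fun x hxu hxv =>
    (Finset.mem_sdiff.1 ((mem_iff_of_mem_quasiStirlingWords hv).1 hxv)).2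
      ((mem_iff_of_mem_quasiStirlingWords hu).1 hxu)
  rw [mem_quasiStirlingWords, ← Multiset.cons_coe, coe_append_cons, val_add_val_eq_cons_cons ha,
    (mem_quasiStirlingWords.1 hu).1, (mem_quasiStirlingWords.1 hv).1, ← hsplit, add_add_add_comm]
  exact ⟨rfl, noncrossing_cons_append_cons (mem_quasiStirlingWords.1 hu).2
    (mem_quasiStirlingWords.1 hv).2 huv hau hav⟩

theorem exists_eq_cons_append_cons_of_mem_quasiStirlingWords (hw : w ∈ quasiStirlingWords A)
    (hne : w ≠ []) :
    ∃ a ∈ A, ∃ B ⊆ A.erase a, ∃ u ∈ quasiStirlingWords B,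
      ∃ v ∈ quasiStirlingWords (A.erase a \ B), w = a :: (u ++ a :: v) := by
  obtain ⟨a, t, rfl⟩ := List.exists_cons_of_ne_nil hne
  have ha : a ∈ A := (mem_iff_of_mem_quasiStirlingWords hw).1 List.mem_cons_self
  obtain ⟨hcount, hnc⟩ := mem_quasiStirlingWords.1 hw
  rw [val_add_val_eq_cons_cons ha, ← Multiset.cons_coe, Multiset.cons_inj_right] at hcount
  obtain ⟨u, v, rfl⟩ := List.append_of_mem
    (Multiset.mem_coe.1 (hcount ▸ Multiset.mem_cons_self a _))
  rw [coe_append_cons, Multiset.cons_inj_right] at hcount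
  have hmem : ∀ x, x ∈ u ∨ x ∈ v ↔ x ∈ A.erase a := fun x => by
    rw [← Finset.mem_val, ← or_self (x ∈ (A.erase a).val), ← Multiset.mem_add, ← hcount,
      Multiset.mem_add, Multiset.mem_coe, Multiset.mem_coe]
  have hau : a ∉ u := fun h => Finset.notMem_erase a A ((hmem a).1 (Or.inl h))
  have hav : a ∉ v := fun h => Finset.notMem_erase a A ((hmem a).1 (Or.inr h))
  have huv : u.Disjoint v := fun b hbu hbv => by
    refine hnc a b (fun h => hau (h ▸ hbu)) ?_
    exact ((List.singleton_sublist.2 hbu).append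
      ((List.singleton_sublist.2 hbv).cons_cons a)).cons_cons a
  have hu := eq_filter_val_add_filter_val (· ∈ u) hcount (fun x hx => hx)
    (fun x hx hxu => huv hxu hx)
  have hv := eq_filter_val_add_filter_val (· ∉ u) ((add_comm _ _).trans hcount)
    (fun x hx hxu => huv hxu hx) (fun x hx hxu => hxu hx)
  rw [Finset.filter_not] at hv
  refine ⟨a, ha, _, Finset.filter_subset (· ∈ u) _, u, ?_, v, ?_, rfl⟩
  · exact mem_quasiStirlingWords.2 ⟨hu, hnc.sublist (by simp)⟩
  · exact mem_quasiStirlingWords.2 ⟨hv, hnc.sublist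
      (((List.sublist_cons_self a v).trans (List.sublist_append_right u _)).cons a)⟩

theorem card_quasiStirlingWords_eq_sum (hA : A.Nonempty) :
    #(quasiStirlingWords A) = ∑ a ∈ A, ∑ B ∈ (A.erase a).powerset,
      #(quasiStirlingWords B) * #(quasiStirlingWords (A.erase a \ B)) := by
  simp only [← Finset.card_product, ← Finset.card_sigma]
  symm
  refine Finset.card_bij (fun x _ => x.1 :: (x.2.2.1 ++ x.1 :: x.2.2.2)) ?_ ?_ ?_
  · rintro ⟨a, B, u, v⟩ hx
    simp only [Finset.mem_sigma, Finset.mem_powerset, Finset.mem_product] at hx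
    exact cons_append_cons_mem_quasiStirlingWords hx.1 hx.2.1 hx.2.2.1 hx.2.2.2
  · rintro ⟨a, B, u, v⟩ hx ⟨a', B', u', v'⟩ hx' h
    simp only [Finset.mem_sigma, Finset.mem_powerset, Finset.mem_product] at hx hx'
    obtain ⟨rfl, h⟩ := List.cons.inj h
    have hau := notMem_of_mem_quasiStirlingWords hx.2.2.1 fun h =>
      Finset.notMem_erase a A (hx.2.1 h)
    have hav := notMem_of_mem_quasiStirlingWords hx.2.2.2 fun h =>
      Finset.notMem_erase a A (Finset.sdiff_subset h)
    obtain ⟨rfl, -, rfl⟩ := (List.append_cons_inj_of_notMem hau hav).1 h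
    obtain rfl : B = B' := (toFinset_of_mem_quasiStirlingWords hx.2.2.1).symm.trans
      (toFinset_of_mem_quasiStirlingWords hx'.2.2.1)
    rfl
  · intro w hw
    have hne : w ≠ [] := by
      rintro rfl
      simpa [hA.card_pos.ne'] using length_of_mem_quasiStirlingWords hw
    obtain ⟨a, ha, B, hB, u, hu, v, hv, rfl⟩ :=
      exists_eq_cons_append_cons_of_mem_quasiStirlingWords hw hne
    exact ⟨⟨a, B, u, v⟩, by simp [ha, hB, hu, hv], rfl⟩

theorem card_quasiStirlingWords (A : Finset α) :
    #(quasiStirlingWords A) = (#A)! * catalan #A := by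
  induction A using Finset.strongInduction with
  | H A ih =>
  rcases A.eq_empty_or_nonempty with rfl | hA
  · simp [quasiStirlingWords_empty]
  obtain ⟨m, hm⟩ : ∃ m, #A = m + 1 := Nat.exists_eq_succ_of_ne_zero hA.card_pos.ne'
  have hsplit : ∀ a ∈ A, ∑ B ∈ (A.erase a).powerset,
      #(quasiStirlingWords B) * #(quasiStirlingWords (A.erase a \ B)) = m ! * catalan (m + 1) := by
    intro a ha
    have hcard : #(A.erase a) = m := by rw [Finset.card_erase_of_mem ha, hm, Nat.add_sub_cancel]
    calc _ = ∑ B ∈ (A.erase a).powerset, (#B)! * catalan #B * ((m - #B)! * catalan (m - #B)) := by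
          refine Finset.sum_congr rfl fun B hB => ?_
          rw [Finset.mem_powerset] at hB
          rw [ih B (hB.trans_ssubset (Finset.erase_ssubset ha)),
            ih _ (Finset.sdiff_subset.trans_ssubset (Finset.erase_ssubset ha)),
            Finset.card_sdiff_of_subset hB, hcard]
      _ = m ! * catalan (m + 1) := by
        rw [Finset.sum_powerset_apply_card
          (fun k => k ! * catalan k * ((m - k)! * catalan (m - k))), hcard]
        simp_rw [smul_eq_mul]
        exact sum_range_choose_mul_factorial_mul_catalan m
  rw [card_quasiStirlingWords_eq_sum hA, Finset.sum_congr rfl hsplit, Finset.sum_const, hm,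
    smul_eq_mul, Nat.factorial_succ, mul_assoc]

def plateaus (w : List α) : Finset ℕ :=
  {i ∈ Finset.range w.length | w[i + 1]? = w[i]?}

theorem mem_plateaus_take_append_cons_cons_drop {u : List α} {i : ℕ} (a : α)
    (hi : i ≤ u.length) : i ∈ plateaus (u.take i ++ a :: a :: u.drop i) := by
  have hlen : (u.take i).length = i := List.length_take_of_le hi
  simp [plateaus, hlen]

theorem exists_eq_take_append_cons_cons_drop_of_mem_plateaus {w : List α} {i : ℕ}
    (hi : i ∈ plateaus w) : ∃ a, w = w.take i ++ a :: a :: w.drop (i + 2) := by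
  obtain ⟨hi, hplat⟩ := Finset.mem_filter.1 hi
  rw [Finset.mem_range] at hi
  obtain ⟨hi1, ha1⟩ := List.getElem?_eq_some_iff.1 (hplat.trans (List.getElem?_eq_getElem hi))
  refine ⟨w[i], ?_⟩
  conv_lhs => rw [← List.take_append_drop i w, List.drop_eq_getElem_cons hi,
    List.drop_eq_getElem_cons hi1, ha1]

theorem sum_card_plateaus_quasiStirlingWords (A : Finset α) :
    ∑ w ∈ quasiStirlingWords A, #(plateaus w) =
      ∑ a ∈ A, (2 * #(A.erase a) + 1) * #(quasiStirlingWords (A.erase a)) := by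
  have hdom : ∑ a ∈ A, (2 * #(A.erase a) + 1) * #(quasiStirlingWords (A.erase a)) =
      #(A.sigma fun a => (quasiStirlingWords (A.erase a)).sigma fun u =>
        Finset.range (u.length + 1)) := by
    simp only [Finset.card_sigma, Finset.card_range]
    refine Finset.sum_congr rfl fun a _ => ?_
    rw [Finset.sum_congr rfl fun u hu => by rw [length_of_mem_quasiStirlingWords hu],
      Finset.sum_const, smul_eq_mul, mul_comm]
  rw [hdom, ← Finset.card_sigma]
  symm
  refine Finset.card_bij (fun x _ => ⟨x.2.1.take x.2.2 ++ x.1 :: x.1 :: x.2.1.drop x.2.2, x.2.2⟩)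
    ?_ ?_ ?_
  · rintro ⟨a, u, i⟩ hx
    simp only [Finset.mem_sigma, Finset.mem_range, Nat.lt_succ_iff] at hx
    obtain ⟨ha, hu, hi⟩ := hx
    refine Finset.mem_sigma.2 ⟨?_, mem_plateaus_take_append_cons_cons_drop a hi⟩
    rwa [append_cons_cons_mem_quasiStirlingWords_iff ha, List.take_append_drop]
  · rintro ⟨a, u, i⟩ hx ⟨a', u', i'⟩ hx' h
    simp only [Finset.mem_sigma, Finset.mem_range, Nat.lt_succ_iff] at hx hx'
    simp only [Sigma.mk.injEq] at h
    obtain ⟨h, rfl⟩ := h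
    obtain ⟨rfl, rfl⟩ := take_append_cons_cons_drop_inj hx.2.2 hx'.2.2 h
    rfl
  · rintro ⟨w, i⟩ hx
    obtain ⟨hw, hi⟩ := Finset.mem_sigma.1 hx
    obtain ⟨a, hsplit⟩ := exists_eq_take_append_cons_cons_drop_of_mem_plateaus hi
    have ha : a ∈ A := (mem_iff_of_mem_quasiStirlingWords hw).1 (by rw [hsplit]; simp)
    have hlen : (w.take i).length = i :=
      List.length_take_of_le (Finset.mem_range.1 (Finset.mem_filter.1 hi).1).le
    rw [hsplit, append_cons_cons_mem_quasiStirlingWords_iff ha] at hw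
    refine ⟨⟨a, w.take i ++ w.drop (i + 2), i⟩, ?_, ?_⟩
    · simp only [Finset.mem_sigma, Finset.mem_range, Nat.lt_succ_iff, List.length_append, hlen]
      exact ⟨ha, hw, Nat.le_add_right i _⟩
    · simp only [List.take_left' hlen, List.drop_left' hlen]
      rw [← hsplit]

end

theorem coe_ofFn_eq_univ_val_add_univ_val_iff {β : Type*} [Fintype β] [DecidableEq β] {N : ℕ}
    (w : Fin N → β) :
    (↑(List.ofFn w) : Multiset β) = univ.val + univ.val ↔ ∀ b, #{i | w i = b} = 2 := by
  rw [← Fin.univ_val_map, Multiset.ext]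
  refine forall_congr' fun b => ?_
  rw [Multiset.count_map, Multiset.count_add, Multiset.count_univ]
  simp only [Finset.card, Finset.filter_val, eq_comm (a := b)]

theorem ofFn_mem_quasiStirlingWords_iff {n : ℕ} (w : Fin (2 * n) → Fin n) :
    List.ofFn w ∈ quasiStirlingWords univ ↔ w ∈ quasiStirlingSet n := by
  rw [mem_quasiStirlingWords, coe_ofFn_eq_univ_val_add_univ_val_iff, noncrossing_ofFn_iff,
    quasiStirlingSet, Finset.mem_filter, and_iff_right (Finset.mem_univ w)]

theorem map_ofFn_quasiStirlingSet (n : ℕ) :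
    (quasiStirlingSet n).map ⟨List.ofFn, List.ofFn_injective⟩ = quasiStirlingWords univ := by
  ext L
  rw [Finset.mem_map]
  constructor
  · rintro ⟨w, hw, rfl⟩
    exact (ofFn_mem_quasiStirlingWords_iff w).2 hw
  · intro hL
    have hlen : L.length = 2 * n := by
      rw [length_of_mem_quasiStirlingWords hL, Finset.card_univ, Fintype.card_fin]
    have hofFn : List.ofFn (fun i : Fin (2 * n) => L[i.val]) = L :=
      List.ext_getElem (by simp [hlen]) fun i _ _ => by simp
    exact ⟨_, (ofFn_mem_quasiStirlingWords_iff _).1 (by rwa [hofFn]), hofFn⟩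

theorem platW_eq_card_plateaus_ofFn {β : Type*} [DecidableEq β] {N : ℕ} (w : Fin N → β) :
    platW w = #(plateaus (List.ofFn w)) := by
  refine Finset.card_bij (fun i _ => i.val) ?_ (fun _ _ _ _ => Fin.ext) ?_
  · intro i hi
    simp only [Finset.mem_filter, Finset.mem_univ, true_and, plateaus, List.getElem?_ofFn,
      List.length_ofFn, Finset.mem_range, Fin.is_lt, ↓reduceDIte, Fin.eta,
      Option.dite_none_right_eq_some, Option.some.injEq] at hi ⊢
    exact hi
  · intro b hb
    simp only [plateaus, Finset.mem_filter, Finset.mem_range, List.length_ofFn,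
      List.getElem?_ofFn] at hb
    obtain ⟨hbN, hplat⟩ := hb
    refine ⟨⟨b, hbN⟩, ?_, rfl⟩
    by_cases hb1 : b + 1 < N
    · simp_all
    · simp [hb1] at hplat
      omega

theorem sum_platW_quasiStirlingSet (n : ℕ) :
    ∑ w ∈ quasiStirlingSet n, platW w =
      ∑ L ∈ quasiStirlingWords (univ : Finset (Fin n)), #(plateaus L) := by
  rw [← map_ofFn_quasiStirlingSet, Finset.sum_map]
  simp only [Function.Embedding.coeFn_mk, platW_eq_card_plateaus_ofFn]

end QuasiStirling

open QuasiStirling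

/-- The total number of plateaus over all quasi-Stirling permutations of size
`n` satisfies `2 · ∑_{w ∈ Q̄_n} plat(w) = (n+1) · (2n)!/(n+1)!`; equivalently,
the average number of plateaus is `(n+1)/2`. -/
theorem average_plateaus_quasiStirling (n : ℕ) (hn : 1 ≤ n) :
    2 * ∑ w ∈ quasiStirlingSet n, (platW w : ℚ)
      = ((n : ℚ) + 1) * (2 * n).factorial / (n + 1).factorial := by
  obtain ⟨m, rfl⟩ := Nat.exists_eq_add_of_le' hn
  have hsum : ∑ w ∈ quasiStirlingSet (m + 1), platW w =
      (m + 1) * ((2 * m + 1) * (m ! * catalan m)) := by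
    rw [sum_platW_quasiStirlingSet, sum_card_plateaus_quasiStirlingWords]
    simp [Finset.card_erase_of_mem, card_quasiStirlingWords]
  have hfactorials : 2 * ((m + 1) * ((2 * m + 1) * (m ! * catalan m))) * (m + 1 + 1)! =
      (m + 1 + 1) * (2 * (m + 1))! := by
    rw [show 2 * (m + 1) = 2 * m + 1 + 1 by ring, Nat.factorial_succ (2 * m + 1),
      Nat.factorial_succ (2 * m), ← factorial_mul_catalan_mul_factorial_succ m,
      Nat.factorial_succ (m + 1)]
    ring
  rw [← Nat.cast_sum, hsum, eq_div_iff (by positivity)]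
  exact_mod_cast hfactorials
end

section
/- For every n ≥ 1 and all nonnegative integers a, b, c, the number of Stirling permutations w of size n with asc(w) = a, des(w) = b and plat(w) = c is invariant under any permutation of the triple (a, b, c); for example, it equals the number of Stirling permutations w of size n with asc(w) = b, des(w) = c and plat(w) = a. -/
open Finset
open scoped Classical

/-- Number of ascents of a word `w` of length `N`: ascent indices range over
`{0, …, N-1}`; the index `0` is always an ascent, and an index `1 ≤ i ≤ N-1`
is an ascent if the `i`-th letter is smaller than the `(i+1)`-st one
(0-indexed: `w (i-1) < w i`). -/
noncomputable def ascW {α : Type*} [LinearOrder α] {N : ℕ} (w : Fin N → α) : ℕ :=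
  (univ.filter fun i : Fin N =>
    (i : ℕ) = 0 ∨ w ⟨(i : ℕ) - 1, lt_of_le_of_lt (Nat.sub_le _ _) i.isLt⟩ < w i).card

/-- The set of Stirling permutations of size `n`, encoded as words
`w : Fin (2 * n) → Fin n` in which every letter occurs exactly twice and there
are no indices `i < j < l` with `w i = w l` and `w j < w i`
(avoidance of the pattern `212`). -/
noncomputable def stirlingSet (n : ℕ) : Finset (Fin (2 * n) → Fin n) :=
  univ.filter fun w =>
    (∀ a : Fin n, (univ.filter fun i => w i = a).card = 2) ∧
    ∀ i j l : Fin (2 * n), i < j → j < l → w i = w l → ¬ w j < w i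

/-!
Every Stirling permutation of size `n + 1` arises in exactly one way from one of size `n` by
inserting the adjacent pair `(n+1)(n+1)` into one of its `2n + 1` gaps (a letter between the two
copies of `n + 1` would form a `212`). Counting the first gap as an ascent and the last one as a
descent, a word of size `n ≥ 1` has exactly `asc` ascent gaps, `des` descent gaps and `plat`
plateau gaps, and inserting into a gap replaces it by one gap of each type: the statistic of that
gap's type is kept and the other two grow by one. The resulting recurrence for the joint
distribution treats the three statistics alike, so by induction from `11`, with statistics
`(1, 1, 1)`, the distribution is symmetric.
-/

namespace StirlingPerm

variable {n N : ℕ}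

/-- The word `0, w 0 + 1, …, w (N - 1) + 1, 0, 0, …`. Gap `j ≤ N` of `w` lies between the
entries `j` and `j + 1` of `pad w`, so for `N ≠ 0` the two boundary gaps are an ascent and a
descent. -/
def pad (w : Fin N → Fin n) : ℕ → ℕ
  | 0 => 0
  | j + 1 => if h : j < N then w ⟨j, h⟩ + 1 else 0

@[simp] lemma pad_zero (w : Fin N → Fin n) : pad w 0 = 0 := rfl

lemma pad_succ_of_lt (w : Fin N → Fin n) {j : ℕ} (h : j < N) :
    pad w (j + 1) = w ⟨j, h⟩ + 1 :=
  dif_pos h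

lemma pad_succ_of_le (w : Fin N → Fin n) {j : ℕ} (h : N ≤ j) : pad w (j + 1) = 0 :=
  dif_neg (by omega)

lemma pad_lt (w : Fin N → Fin n) (j : ℕ) : pad w j < n + 1 := by
  rcases j with _ | j
  · simp
  · by_cases h : j < N
    · rw [pad_succ_of_lt w h]; have := (w ⟨j, h⟩).isLt; omega
    · rw [pad_succ_of_le w (not_lt.1 h)]; omega

/-- `0`, `1`, `2` encode an ascent, a descent and a plateau, in the order of `stats`. -/
def gapType (P : ℕ → ℕ) (j : ℕ) : Fin 3 :=
  if P j < P (j + 1) then 0 else if P (j + 1) < P j then 1 else 2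

lemma gapType_eq_zero {P : ℕ → ℕ} {j : ℕ} : gapType P j = 0 ↔ P j < P (j + 1) := by
  unfold gapType; split_ifs <;> simp_all

lemma gapType_eq_one {P : ℕ → ℕ} {j : ℕ} : gapType P j = 1 ↔ P (j + 1) < P j := by
  unfold gapType; split_ifs <;> simp_all; omega

lemma gapType_eq_two {P : ℕ → ℕ} {j : ℕ} : gapType P j = 2 ↔ P j = P (j + 1) := by
  unfold gapType; split_ifs <;> simp_all <;> omega

noncomputable def stats {α : Type*} [LinearOrder α] (w : Fin N → α) : Fin 3 → ℕ :=
  ![ascW w, desW w, platW w]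

lemma stats_eq_iff {α : Type*} [LinearOrder α] (w : Fin N → α) (v : Fin 3 → ℕ) :
    stats w = v ↔ ascW w = v 0 ∧ desW w = v 1 ∧ platW w = v 2 := by
  simp [funext_iff, Fin.forall_fin_succ, stats, eq_comm]

lemma card_filter_fin (M : ℕ) (p : ℕ → Prop) [DecidablePred p] :
    #{i : Fin M | p i} = #{j ∈ range M | p j} := by
  simp only [card_filter, Fin.sum_univ_eq_sum_range (fun j => if p j then 1 else 0)]

lemma ascW_eq_card_gapType (w : Fin N → Fin n) :
    ascW w = #{j ∈ range (N + 1) | gapType (pad w) j = 0} := by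
  rw [card_filter, sum_range_succ, if_neg (by simp [gapType_eq_zero, pad_succ_of_le]),
    ← card_filter, add_zero, ← card_filter_fin, ascW]
  congr 1
  ext ⟨i, hi⟩
  rw [mem_filter, mem_filter, gapType_eq_zero, pad_succ_of_lt w hi]
  rcases i with _ | i
  · simp
  · simp [pad_succ_of_lt w (by omega : i < N)]

lemma desW_eq_card_gapType (w : Fin N → Fin n) :
    desW w = #{j ∈ range (N + 1) | gapType (pad w) j = 1} := by
  rw [card_filter, sum_range_succ', if_neg (by simp [gapType_eq_one]),
    ← card_filter, add_zero, ← card_filter_fin, desW]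
  congr 1
  ext ⟨i, hi⟩
  rw [mem_filter, mem_filter, gapType_eq_one, pad_succ_of_lt w hi]
  by_cases hlast : i + 1 < N
  · simp [pad_succ_of_lt w hlast, hlast, Nat.ne_of_lt hlast]
  · simp [pad_succ_of_le w (by omega : N ≤ i + 1), hlast]; omega

lemma platW_eq_card_gapType (hN : N ≠ 0) (w : Fin N → Fin n) :
    platW w = #{j ∈ range (N + 1) | gapType (pad w) j = 2} := by
  rw [card_filter, sum_range_succ', if_neg (by simp [gapType_eq_two, pad_succ_of_lt w
    (Nat.pos_of_ne_zero hN)]), ← card_filter, add_zero, ← card_filter_fin, platW]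
  congr 1
  ext ⟨i, hi⟩
  rw [mem_filter, mem_filter, gapType_eq_two, pad_succ_of_lt w hi]
  by_cases hlast : i + 1 < N
  · simp [pad_succ_of_lt w hlast, hlast, Fin.ext_iff, eq_comm]
  · simp [pad_succ_of_le w (by omega : N ≤ i + 1), hlast]

lemma stats_eq_card_gapType (hN : N ≠ 0) (w : Fin N → Fin n) (k : Fin 3) :
    stats w k = #{j ∈ range (N + 1) | gapType (pad w) j = k} := by
  fin_cases k
  · exact ascW_eq_card_gapType w
  · exact desW_eq_card_gapType w
  · exact platW_eq_card_gapType hN w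


def seqInsertPair (P : ℕ → ℕ) (g v : ℕ) (j : ℕ) : ℕ :=
  if j ≤ g then P j else if j ≤ g + 2 then v else P (j - 2)

section seqInsertPair

variable {P : ℕ → ℕ} {g v : ℕ}

lemma seqInsertPair_of_le {j : ℕ} (h : j ≤ g) : seqInsertPair P g v j = P j := if_pos h

lemma seqInsertPair_of_lt_of_le {j : ℕ} (h₁ : g < j) (h₂ : j ≤ g + 2) :
    seqInsertPair P g v j = v := by
  simp [seqInsertPair, h₂, show ¬ j ≤ g by omega]

lemma seqInsertPair_add_three (x : ℕ) : seqInsertPair P g v (g + 3 + x) = P (g + 1 + x) := by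
  simp [seqInsertPair, show ¬ g + 3 + x ≤ g by omega, show ¬ g + 3 + x ≤ g + 2 by omega,
    show g + 3 + x - 2 = g + 1 + x by omega]

/-- The gap `g` is replaced by an ascent, a plateau and a descent, one gap of each type. -/
lemma card_gapType_seqInsertPair {M : ℕ} (hg : g < M) (hg₀ : P g < v) (hg₁ : P (g + 1) < v)
    (k : Fin 3) :
    #{j ∈ range (M + 2) | gapType (seqInsertPair P g v) j = k}
      + (if gapType P g = k then 1 else 0) = #{j ∈ range M | gapType P j = k} + 1 := by
  obtain ⟨r, rfl⟩ := Nat.exists_eq_add_of_lt hg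
  have hlow : ∀ j ∈ range g, gapType (seqInsertPair P g v) j = gapType P j := fun j hj => by
    rw [mem_range] at hj
    simp only [gapType, seqInsertPair_of_le hj.le, seqInsertPair_of_le (Nat.succ_le_of_lt hj)]
  have hhigh : ∀ x, gapType (seqInsertPair P g v) (g + 3 + x) = gapType P (g + 1 + x) := by
    intro x
    simp only [gapType, seqInsertPair_add_three, show g + 3 + x + 1 = g + 3 + (x + 1) by omega]
    rfl
  have hasc : gapType (seqInsertPair P g v) g = 0 := by
    rw [gapType_eq_zero, seqInsertPair_of_le le_rfl,
      seqInsertPair_of_lt_of_le (j := g + 1) (by omega) (by omega)]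
    exact hg₀
  have hplat : gapType (seqInsertPair P g v) (g + 1) = 2 := by
    rw [gapType_eq_two, seqInsertPair_of_lt_of_le (j := g + 1) (by omega) (by omega),
      seqInsertPair_of_lt_of_le (j := g + 1 + 1) (by omega) (by omega)]
  have hdes : gapType (seqInsertPair P g v) (g + 2) = 1 := by
    rw [gapType_eq_one, show g + 2 + 1 = g + 3 + 0 by omega, seqInsertPair_add_three,
      seqInsertPair_of_lt_of_le (j := g + 2) (by omega) le_rfl]
    exact hg₁
  simp only [card_filter]
  rw [show g + r + 1 + 2 = g + 3 + r by omega, show g + r + 1 = g + 1 + r by omega,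
    sum_range_add, sum_range_add, sum_range_add, sum_range_succ _ g, sum_range_succ _ 2,
    sum_range_succ _ 1, sum_range_one, add_zero, hasc, hplat, hdes,
    sum_congr rfl fun j hj => by rw [hlow j hj]]
  simp only [hhigh]
  fin_cases k <;> simp <;> omega

end seqInsertPair

def insertPair (w : Fin N → Fin n) (g : Fin (N + 1)) (i : Fin (N + 2)) : Fin (n + 1) :=
  if h₁ : (i : ℕ) < g then (w ⟨i, by have := g.isLt; omega⟩).castSucc
  else if h₂ : (i : ℕ) < g + 2 then Fin.last n
  else (w ⟨i - 2, by have := i.isLt; omega⟩).castSucc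

lemma pad_insertPair (w : Fin N → Fin n) (g : Fin (N + 1)) :
    pad (insertPair w g) = seqInsertPair (pad w) g (n + 1) := by
  funext j
  rcases j with _ | j
  · rfl
  by_cases hj : j < N + 2
  · rw [pad_succ_of_lt _ hj]
    unfold insertPair seqInsertPair
    by_cases h₁ : j < g
    · simp [h₁, show j + 1 ≤ g by omega, pad_succ_of_lt w (show j < N by omega)]
    by_cases h₂ : j < g + 2
    · simp [h₁, h₂, show ¬ j + 1 ≤ g by omega, show j + 1 ≤ g + 2 by omega]
    · simp [h₁, h₂, show ¬ j + 1 ≤ g + 2 by omega, show j + 1 - 2 = j - 2 + 1 by omega,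
        pad_succ_of_lt w (show j - 2 < N by omega)]
  · have := g.isLt
    simp [pad_succ_of_le _ (not_lt.1 hj), seqInsertPair, show ¬ j + 1 ≤ g by omega,
      show ¬ j + 1 ≤ g + 2 by omega, show j + 1 - 2 = j - 2 + 1 by omega,
      pad_succ_of_le w (show N ≤ j - 2 by omega)]

lemma stats_insertPair (hN : N ≠ 0) (w : Fin N → Fin n) (g : Fin (N + 1)) :
    stats (insertPair w g) = Function.update (stats w + 1) (gapType (pad w) g)
      (stats w (gapType (pad w) g)) := by
  funext k
  have key := card_gapType_seqInsertPair g.isLt (pad_lt w g) (pad_lt w (g + 1)) k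
  rw [stats_eq_card_gapType (by omega), pad_insertPair, show N + 2 + 1 = N + 1 + 2 by omega]
  simp only [Function.update_apply, Pi.add_apply, Pi.one_apply, stats_eq_card_gapType hN]
  by_cases h : k = gapType (pad w) g
  · subst h
    simp only [if_true] at key ⊢
    omega
  · simp only [h, Ne.symm h, if_false] at key ⊢
    omega

def skipPair (g : Fin (N + 1)) (i : Fin N) : Fin (N + 2) :=
  ⟨if (i : ℕ) < g then i else i + 2, by split <;> omega⟩

lemma strictMono_skipPair (g : Fin (N + 1)) : StrictMono (skipPair g) := by
  intro i j h
  simp only [skipPair, Fin.mk_lt_mk]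
  rw [Fin.lt_def] at h
  split_ifs <;> omega

lemma insertPair_skipPair (w : Fin N → Fin n) (g : Fin (N + 1)) (i : Fin N) :
    insertPair w g (skipPair g i) = (w i).castSucc := by
  by_cases h : (i : ℕ) < g
  · simp [insertPair, skipPair, h]
  · simp [insertPair, skipPair, h, show ¬ (i : ℕ) + 2 < g by omega,
      show ¬ (i : ℕ) + 2 < g + 2 by omega]

lemma insertPair_eq_last_iff (w : Fin N → Fin n) (g : Fin (N + 1)) (j : Fin (N + 2)) :
    insertPair w g j = Fin.last n ↔ (j : ℕ) = g ∨ (j : ℕ) = g + 1 := by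
  unfold insertPair
  split_ifs
  · simp only [(Fin.castSucc_lt_last _).ne, false_iff]; omega
  · simp only [true_iff]; omega
  · simp only [(Fin.castSucc_lt_last _).ne, false_iff]; omega

lemma exists_skipPair_eq (g : Fin (N + 1)) (j : Fin (N + 2))
    (hj : ¬ ((j : ℕ) = g ∨ (j : ℕ) = g + 1)) : ∃ i, skipPair g i = j := by
  by_cases h : (j : ℕ) < g
  · exact ⟨⟨j, by omega⟩, Fin.ext (by simp [skipPair, h])⟩
  · refine ⟨⟨j - 2, by omega⟩, Fin.ext ?_⟩
    simp only [skipPair, Fin.val_mk]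
    split_ifs <;> omega

lemma card_insertPair_eq_castSucc (w : Fin N → Fin n) (g : Fin (N + 1)) (a : Fin n) :
    #{j | insertPair w g j = a.castSucc} = #{i | w i = a} := by
  symm
  refine card_nbij (skipPair g) (fun i hi => ?_) (strictMono_skipPair g).injective.injOn ?_
  · simp_all [insertPair_skipPair]
  · intro j hj
    simp only [coe_filter, mem_univ, true_and, Set.mem_ofPred_eq] at hj
    have hne : insertPair w g j ≠ Fin.last n := hj ▸ (Fin.castSucc_lt_last a).ne
    obtain ⟨i, rfl⟩ := exists_skipPair_eq g j (mt (insertPair_eq_last_iff w g j).2 hne)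
    rw [insertPair_skipPair, Fin.castSucc_inj] at hj
    exact ⟨i, by simpa using hj, rfl⟩

lemma card_insertPair_eq_last (w : Fin N → Fin n) (g : Fin (N + 1)) :
    #{j | insertPair w g j = Fin.last n} = 2 := by
  have : ({j | insertPair w g j = Fin.last n} : Finset (Fin (N + 2)))
      = {⟨g, by omega⟩, ⟨g + 1, by omega⟩} := by
    ext j
    simp only [mem_filter, mem_univ, true_and, insertPair_eq_last_iff]
    simp only [mem_insert, mem_singleton, Fin.ext_iff]
  rw [this, card_pair (by simp [Fin.ext_iff])]

def Avoids212 {α : Type*} [LinearOrder α] (u : Fin N → α) : Prop :=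
  ∀ i j l : Fin N, i < j → j < l → u i = u l → ¬ u j < u i

lemma avoids212_insertPair_iff (w : Fin N → Fin n) (g : Fin (N + 1)) :
    Avoids212 (insertPair w g) ↔ Avoids212 w := by
  have hmono := strictMono_skipPair g
  constructor
  · intro hu i j l hij hjl heq hlt
    apply hu _ _ _ (hmono hij) (hmono hjl)
    · simp [insertPair_skipPair, heq]
    · simpa [insertPair_skipPair] using hlt
  · intro hw i j l hij hjl heq hlt
    have hi : insertPair w g i ≠ Fin.last n := by
      intro hi
      have hl := (insertPair_eq_last_iff w g l).1 (heq ▸ hi)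
      rw [insertPair_eq_last_iff] at hi
      rw [Fin.lt_def] at hij hjl
      omega
    have hj : insertPair w g j ≠ Fin.last n := (hlt.trans_le (Fin.le_last _)).ne
    obtain ⟨i, rfl⟩ := exists_skipPair_eq g i (mt (insertPair_eq_last_iff w g i).2 hi)
    obtain ⟨j, rfl⟩ := exists_skipPair_eq g j (mt (insertPair_eq_last_iff w g j).2 hj)
    obtain ⟨l, rfl⟩ := exists_skipPair_eq g l (mt (insertPair_eq_last_iff w g l).2 (heq ▸ hi))
    simp only [insertPair_skipPair, Fin.castSucc_inj, Fin.castSucc_lt_castSucc_iff] at heq hlt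
    exact hw i j l (hmono.lt_iff_lt.1 hij) (hmono.lt_iff_lt.1 hjl) heq hlt

lemma mem_stirlingSet {w : Fin (2 * n) → Fin n} :
    w ∈ stirlingSet n ↔ (∀ a, #{i | w i = a} = 2) ∧ Avoids212 w := by
  simp [stirlingSet, Avoids212]

lemma insertPair_mem_stirlingSet_iff (w : Fin (2 * n) → Fin n) (g : Fin (2 * n + 1)) :
    insertPair w g ∈ stirlingSet (n + 1) ↔ w ∈ stirlingSet n := by
  rw [mem_stirlingSet, mem_stirlingSet, Fin.forall_fin_succ']
  refine and_congr ⟨fun h a => ?_, fun h => ⟨fun a => ?_, card_insertPair_eq_last w g⟩⟩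
    (avoids212_insertPair_iff w g)
  · exact (card_insertPair_eq_castSucc w g a).symm.trans (h.1 a)
  · exact (card_insertPair_eq_castSucc w g a).trans (h a)

lemma insertPair_injective₂ {w w' : Fin N → Fin n} {g g' : Fin (N + 1)}
    (h : insertPair w g = insertPair w' g') : w = w' ∧ g = g' := by
  have hg : g = g' := by
    have h₁ := (insertPair_eq_last_iff w' g' ⟨g, by omega⟩).1
      ((congrFun h _).symm.trans ((insertPair_eq_last_iff w g _).2 (Or.inl rfl)))
    have h₂ := (insertPair_eq_last_iff w g ⟨g', by omega⟩).1
      ((congrFun h _).trans ((insertPair_eq_last_iff w' g' _).2 (Or.inl rfl)))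
    exact Fin.ext (by simp only at h₁ h₂; omega)
  subst hg
  refine ⟨funext fun i => ?_, rfl⟩
  simpa only [insertPair_skipPair, Fin.castSucc_inj] using congrFun h (skipPair g i)

/-- A letter strictly between the two occurrences of the largest letter would form a `212`. -/
lemma exists_eq_last_iff_of_avoids212 {u : Fin (N + 2) → Fin (n + 1)} (hu : Avoids212 u)
    (hcard : #{j | u j = Fin.last n} = 2) :
    ∃ g : Fin (N + 1), ∀ j, u j = Fin.last n ↔ (j : ℕ) = g ∨ (j : ℕ) = g + 1 := by
  obtain ⟨p, q, hpq, hs⟩ := card_eq_two.1 hcard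
  wlog hlt : p < q generalizing p q
  · exact this q p hpq.symm (by rw [hs, pair_comm]) (lt_of_le_of_ne (not_lt.1 hlt) hpq.symm)
  have hlast : ∀ j, u j = Fin.last n ↔ j = p ∨ j = q := fun j => by
    simpa using Finset.ext_iff.1 hs j
  have hp := (hlast p).2 (Or.inl rfl)
  have hq := (hlast q).2 (Or.inr rfl)
  have hadj : (q : ℕ) = p + 1 := by
    by_contra hne
    rw [Fin.lt_def] at hlt
    let j : Fin (N + 2) := ⟨p + 1, by omega⟩
    have hj : u j ≠ Fin.last n := by
      rw [Ne, hlast, Fin.ext_iff, Fin.ext_iff]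
      simp only [j]
      omega
    refine hu p j q (by simp [Fin.lt_def, j]) (by simp [Fin.lt_def, j]; omega) (hp.trans hq.symm) ?_
    rw [hp]
    exact Fin.lt_last_iff_ne_last.2 hj
  refine ⟨⟨p, by omega⟩, fun j => ?_⟩
  rw [hlast, Fin.ext_iff, Fin.ext_iff, hadj]

lemma exists_insertPair_eq {u : Fin (N + 2) → Fin (n + 1)} {g : Fin (N + 1)}
    (hg : ∀ j, u j = Fin.last n ↔ (j : ℕ) = g ∨ (j : ℕ) = g + 1) :
    ∃ w : Fin N → Fin n, insertPair w g = u := by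
  have hne : ∀ i, u (skipPair g i) ≠ Fin.last n := fun i => by
    rw [Ne, hg]
    simp only [skipPair]
    split_ifs <;> omega
  refine ⟨fun i => (u (skipPair g i)).castPred (hne i), funext fun j => ?_⟩
  by_cases hj : (j : ℕ) = g ∨ (j : ℕ) = g + 1
  · rw [(insertPair_eq_last_iff _ g j).2 hj, (hg j).2 hj]
  · obtain ⟨i, rfl⟩ := exists_skipPair_eq g j hj
    rw [insertPair_skipPair, Fin.castSucc_castPred]

lemma sum_stirlingSet_succ {β : Type*} [AddCommMonoid β]
    (f : (Fin (2 * (n + 1)) → Fin (n + 1)) → β) :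
    ∑ u ∈ stirlingSet (n + 1), f u = ∑ w ∈ stirlingSet n, ∑ g, f (insertPair w g) := by
  rw [← sum_product']
  symm
  refine sum_nbij (fun x => insertPair x.1 x.2) (fun x hx => ?_) (fun x _ y _ h => ?_)
    (fun u hu => ?_) (fun _ _ => rfl)
  · exact (insertPair_mem_stirlingSet_iff x.1 x.2).2 (mem_product.1 hx).1
  · obtain ⟨hw, hg⟩ := insertPair_injective₂ h
    exact Prod.ext hw hg
  · obtain ⟨hcard, havoid⟩ := mem_stirlingSet.1 hu
    obtain ⟨g, hg⟩ := exists_eq_last_iff_of_avoids212 havoid (hcard (Fin.last n))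
    obtain ⟨w, rfl⟩ := exists_insertPair_eq hg
    exact ⟨(w, g), by simpa using (insertPair_mem_stirlingSet_iff w g).1 hu, rfl⟩

lemma sum_stirlingSet_succ_stats (hn : n ≠ 0) {β : Type*} [AddCommMonoid β]
    (φ : (Fin 3 → ℕ) → β) :
    ∑ u ∈ stirlingSet (n + 1), φ (stats u) =
      ∑ w ∈ stirlingSet n, ∑ k,
        stats w k • φ (Function.update (stats w + 1) k (stats w k)) := by
  refine (sum_stirlingSet_succ fun u : Fin (2 * n + 2) → Fin (n + 1) => φ (stats u)).trans
    (sum_congr rfl fun w _ => ?_)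
  simp only [stats_insertPair (by omega : 2 * n ≠ 0)]
  refine (sum_fiberwise' univ (fun g : Fin (2 * n + 1) => gapType (pad w) g)
    fun k => φ (Function.update (stats w + 1) k (stats w k))).symm.trans
    (sum_congr rfl fun k _ => ?_)
  rw [sum_const, stats_eq_card_gapType (by omega) w k, ← card_filter_fin]

lemma sum_smul_update_comp_perm {ι β : Type*} [Fintype ι] [DecidableEq ι] [AddCommMonoid β]
    (σ : Equiv.Perm ι) (φ : (ι → ℕ) → β) (s : ι → ℕ) :
    ∑ k, (s ∘ σ) k • φ (Function.update (s ∘ σ + 1) k ((s ∘ σ) k)) =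
      ∑ k, s k • φ (Function.update (s + 1) k (s k) ∘ σ) := by
  refine Eq.trans (sum_congr rfl fun k _ => ?_) (Equiv.sum_comp σ fun k =>
    s k • φ (Function.update (s + 1) k (s k) ∘ σ))
  rw [Function.update_comp_equiv, Equiv.symm_apply_apply]
  rfl

lemma stats_of_size_one (w : Fin (2 * 1) → Fin 1) : stats w = fun _ => 1 := by
  funext k
  have h₁ : pad w 1 = 1 := by simp [pad_succ_of_lt w (show 0 < 2 * 1 by omega)]
  have h₂ : pad w 2 = 1 := by simp [pad_succ_of_lt w (show 1 < 2 * 1 by omega)]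
  have h₃ : pad w 3 = 0 := pad_succ_of_le w (by omega)
  rw [stats_eq_card_gapType (by omega)]
  simp only [card_filter, show 2 * 1 + 1 = 3 from rfl, sum_range_succ, sum_range_zero, pad_zero,
    gapType, h₁, h₂, h₃]
  fin_cases k <;> rfl

/-- Quantifying over all test functions `φ` lets the recurrence be fed back into the induction
hypothesis. -/
theorem sum_stats_comp_perm (hn : 1 ≤ n) (σ : Equiv.Perm (Fin 3)) {β : Type*}
    [AddCommMonoid β] (φ : (Fin 3 → ℕ) → β) :
    ∑ w ∈ stirlingSet n, φ (stats w ∘ σ) = ∑ w ∈ stirlingSet n, φ (stats w) := by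
  induction n, hn using Nat.le_induction generalizing φ with
  | base => exact sum_congr rfl fun w _ => by rw [stats_of_size_one w]; rfl
  | succ n hn ih =>
    let ψ (s : Fin 3 → ℕ) : β := ∑ k, s k • φ (Function.update (s + 1) k (s k))
    calc ∑ w ∈ stirlingSet (n + 1), φ (stats w ∘ σ)
        = ∑ w ∈ stirlingSet n, ∑ k,
            stats w k • φ (Function.update (stats w + 1) k (stats w k) ∘ σ) :=
          sum_stirlingSet_succ_stats (by omega) fun s => φ (s ∘ σ)
      _ = ∑ w ∈ stirlingSet n, ψ (stats w ∘ σ) :=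
          sum_congr rfl fun w _ => (sum_smul_update_comp_perm σ φ (stats w)).symm
      _ = ∑ w ∈ stirlingSet n, ψ (stats w) := ih ψ
      _ = ∑ w ∈ stirlingSet (n + 1), φ (stats w) :=
          (sum_stirlingSet_succ_stats (by omega) φ).symm

end StirlingPerm

/-- The joint distribution of `(asc, des, plat)` on Stirling permutations is
invariant under any permutation of the triple: for every `σ ∈ S_3`, the number
of Stirling permutations with `(asc, des, plat) = (v 0, v 1, v 2)` equals the
number with `(asc, des, plat) = (v (σ 0), v (σ 1), v (σ 2))`. -/
theorem stirling_asc_des_plat_symmetric (n : ℕ) (hn : 1 ≤ n) (v : Fin 3 → ℕ)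
    (σ : Equiv.Perm (Fin 3)) :
    ((stirlingSet n).filter fun w => ascW w = v 0 ∧ desW w = v 1 ∧ platW w = v 2).card
      = ((stirlingSet n).filter fun w =>
          ascW w = v (σ 0) ∧ desW w = v (σ 1) ∧ platW w = v (σ 2)).card := by
  have key := StirlingPerm.sum_stats_comp_perm hn σ fun s => if s = v ∘ σ then 1 else 0
  simp only [σ.surjective.injective_comp_right.eq_iff, StirlingPerm.stats_eq_iff,
    Function.comp_apply] at key
  rw [card_filter, card_filter]
  exact key
end
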